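/- arXiv:2308.09111 — 8 statements merged into one kernel-verified Lean document; each statement's English description precedes it below -/
import Mathlib

section
/- Let X be a topological space, A a nonempty compact subset of X, and (φ_n)_{n∈ℕ} a monotone non-decreasing sequence of lower semicontinuous functions from X to the extended reals. Then min_{x∈A} sup_{n∈ℕ} φ_n(x) = sup_{n∈ℕ} min_{x∈A} φ_n(x), where both the outer minimum on the left and the inner minima on the right are attained. -/
open Filter Topology

/-- A lower semicontinuous EReal-valued function attains its infimum on a
nonempty compact set. -/
lemma lsc_exists_min {X : Type*} [TopologicalSpace X] {A : Set X} (hA : A.Nonempty)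
    (hAc : IsCompact A) {f : X → EReal} (hf : LowerSemicontinuous f) :
    ∃ x₀ ∈ A, ∀ y ∈ A, f x₀ ≤ f y := by
  have key : (A ∩ ⋂ x : A, f ⁻¹' Set.Iic (f x)).Nonempty := by
    apply hAc.inter_iInter_nonempty _ (fun x => hf.isClosed_preimage _)
    intro u
    rcases u.eq_empty_or_nonempty with rfl | hu
    · simpa using hA
    · obtain ⟨x₀, hx₀u, hx₀min⟩ := u.exists_min_image (fun x : A => f x) hu
      refine ⟨x₀, x₀.2, ?_⟩
      simp only [Set.mem_iInter₂, Set.mem_preimage, Set.mem_Iic]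
      intro x hxu
      exact hx₀min x hxu
  obtain ⟨x₀, hx₀A, hx₀⟩ := key
  refine ⟨x₀, hx₀A, fun y hy => ?_⟩
  simpa using Set.mem_iInter.1 hx₀ ⟨y, hy⟩

/-- minimax interchange for a non-decreasing sequence of lsc functions
over a nonempty compact set, with attainment of the minima. -/
theorem stmt0 {X : Type*} [TopologicalSpace X] (A : Set X) (hA : A.Nonempty)
    (hAc : IsCompact A) (φ : ℕ → X → EReal)
    (hlsc : ∀ n, LowerSemicontinuous (φ n))
    (hmono : ∀ n, φ n ≤ φ (n + 1)) :
    (∃ x₀ ∈ A, (⨆ n, φ n x₀) = ⨅ x ∈ A, ⨆ n, φ n x) ∧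
    (∀ n, ∃ xn ∈ A, φ n xn = ⨅ x ∈ A, φ n x) ∧
    (⨅ x ∈ A, ⨆ n, φ n x) = ⨆ n, ⨅ x ∈ A, φ n x := by
  have hmono' : Monotone φ := monotone_nat_of_le_succ hmono
  -- attainment for each φ n
  have h2 : ∀ n, ∃ xn ∈ A, φ n xn = ⨅ x ∈ A, φ n x := by
    intro n
    obtain ⟨xn, hxnA, hxn⟩ := lsc_exists_min hA hAc (hlsc n)
    exact ⟨xn, hxnA, le_antisymm (le_iInf₂ hxn) (iInf₂_le xn hxnA)⟩
  -- attainment for the sup function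
  have hg : LowerSemicontinuous (fun x => ⨆ n, φ n x) :=
    lowerSemicontinuous_iSup hlsc
  have h1 : ∃ x₀ ∈ A, (⨆ n, φ n x₀) = ⨅ x ∈ A, ⨆ n, φ n x := by
    obtain ⟨x₀, hx₀A, hx₀⟩ := lsc_exists_min hA hAc hg
    exact ⟨x₀, hx₀A, le_antisymm (le_iInf₂ hx₀) (iInf₂_le x₀ hx₀A)⟩
  refine ⟨h1, h2, ?_⟩
  set S := ⨆ n, ⨅ x ∈ A, φ n x with hS
  apply le_antisymm
  · -- hard direction
    have key : (A ∩ ⋂ n : ℕ, φ n ⁻¹' Set.Iic S).Nonempty := by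
      apply hAc.inter_iInter_nonempty _ (fun n => (hlsc n).isClosed_preimage _)
      intro u
      rcases u.eq_empty_or_nonempty with rfl | hu
      · simpa using hA
      · obtain ⟨N, hNu, hNmax⟩ := u.exists_max_image id hu
        obtain ⟨xN, hxNA, hxN⟩ := h2 N
        refine ⟨xN, hxNA, ?_⟩
        simp only [Set.mem_iInter₂, Set.mem_preimage, Set.mem_Iic]
        intro n hnu
        calc φ n xN ≤ φ N xN := hmono' (hNmax n hnu) xN
          _ = ⨅ x ∈ A, φ N x := hxN
          _ ≤ S := le_iSup (fun n => ⨅ x ∈ A, φ n x) N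
    obtain ⟨z, hzA, hz⟩ := key
    have : (⨆ n, φ n z) ≤ S := by
      apply iSup_le
      intro n
      simpa using Set.mem_iInter.1 hz n
    exact le_trans (iInf₂_le z hzA) this
  · apply iSup_le
    intro n
    apply le_iInf₂
    intro x hx
    exact le_trans (iInf₂_le x hx) (le_iSup (fun n => φ n x) n)
end

section
/- Let X be a real topological vector space, Y a real normed space with dual Y*, f : X × Y → ℝ ∪ {±∞}, and A ⊆ X a nonempty compact convex set. If for each y ∈ Y the function x ↦ f(x,y) is concave and upper semicontinuous, then the function g : Y* → ℝ ∪ {±∞} defined by g(y*) = inf_{x∈A} (f(x,·))*(y*) is convex and lower semicontinuous on Y*, where (f(x,·))*(y*) = sup_{y∈Y} (⟨y*, y⟩ − f(x,y)) is the Fenchel conjugate in the second variable. -/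
open Filter Topology

/-- An extended-real-valued function is convex iff its epigraph is a convex set. -/
def IsConvexEFn {E : Type*} [AddCommGroup E] [Module ℝ E] (g : E → EReal) : Prop :=
  Convex ℝ {p : E × ℝ | g p.1 ≤ (p.2 : EReal)}

/-- An extended-real-valued function is concave iff its hypograph is a convex set. -/
def IsConcaveEFn {E : Type*} [AddCommGroup E] [Module ℝ E] (g : E → EReal) : Prop :=
  Convex ℝ {p : E × ℝ | (p.2 : EReal) ≤ g p.1}

/-- From a coercion-difference bound, extract a real lower bound. -/
lemma stmt3_aux_real_below {c r : ℝ} {v : EReal} (h : (c : EReal) - v ≤ (r : EReal)) :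
    ((c - r : ℝ) : EReal) ≤ v := by
  induction v with
  | bot =>
    rw [EReal.coe_sub_bot] at h
    exact absurd h (by simp)
  | coe s =>
    rw [← EReal.coe_sub, EReal.coe_le_coe_iff] at h
    rw [EReal.coe_le_coe_iff]
    linarith
  | top => exact le_top

/-- Concavity via hypograph gives convex combinations of real lower bounds. -/
lemma stmt3_aux_conc {X : Type*} [AddCommGroup X] [Module ℝ X] {h : X → EReal}
    (hc : IsConcaveEFn h) {x₁ x₂ : X} {m₁ m₂ a b : ℝ}
    (h₁ : (m₁ : EReal) ≤ h x₁) (h₂ : (m₂ : EReal) ≤ h x₂)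
    (ha : 0 ≤ a) (hb : 0 ≤ b) (hab : a + b = 1) :
    ((a * m₁ + b * m₂ : ℝ) : EReal) ≤ h (a • x₁ + b • x₂) := by
  have := hc (x := (x₁, m₁)) (y := (x₂, m₂)) h₁ h₂ ha hb hab
  simpa [Prod.smul_mk, smul_eq_mul] using this

/-- If `g q ≤ t + ε` for every `ε > 0` with `t` real, then `g q ≤ t`. -/
lemma stmt3_aux_eps {v : EReal} {t : ℝ} (h : ∀ ε : ℝ, 0 < ε → v ≤ ((t + ε : ℝ) : EReal)) :
    v ≤ (t : EReal) := by
  by_contra hlt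
  push_neg at hlt
  obtain ⟨z, hz1, hz2⟩ := EReal.exists_between_coe_real hlt
  have := h (z - t) (by exact_mod_cast sub_pos.2 (by exact_mod_cast hz1))
  rw [show t + (z - t) = z by ring] at this
  exact absurd (this.trans_lt hz2) (lt_irrefl _)

/-- if `f(·,y)` is concave and usc for every `y`, then
`g(y*) = inf_{x ∈ A} (f(x,·))*(y*)` is convex and lsc on the dual. -/
theorem stmt3 {X Y : Type*} [AddCommGroup X] [Module ℝ X] [TopologicalSpace X]
    [NormedAddCommGroup Y] [NormedSpace ℝ Y]
    (f : X → Y → EReal) (A : Set X) (hA : A.Nonempty) (hAc : IsCompact A)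
    (hAconv : Convex ℝ A)
    (hconc : ∀ y, IsConcaveEFn (fun x => f x y))
    (husc : ∀ y, UpperSemicontinuous (fun x => f x y)) :
    IsConvexEFn (fun q : Y →L[ℝ] ℝ => ⨅ x ∈ A, ⨆ y : Y, (((q y : ℝ) : EReal) - f x y)) ∧
    LowerSemicontinuous
      (fun q : Y →L[ℝ] ℝ => ⨅ x ∈ A, ⨆ y : Y, (((q y : ℝ) : EReal) - f x y)) := by
  set F : X → (Y →L[ℝ] ℝ) → EReal := fun x q => ⨆ y : Y, (((q y : ℝ) : EReal) - f x y) with hF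
  set g : (Y →L[ℝ] ℝ) → EReal := fun q => ⨅ x ∈ A, F x q with hg
  constructor
  · -- Convexity
    rintro ⟨q₁, r₁⟩ h₁ ⟨q₂, r₂⟩ h₂ a b ha hb hab
    simp only [Set.mem_setOf_eq] at h₁ h₂ ⊢
    set q : Y →L[ℝ] ℝ := a • q₁ + b • q₂ with hq
    show g q ≤ (((a • (q₁, r₁) + b • (q₂, r₂)).2 : ℝ) : EReal)
    have hsnd : (a • (q₁, r₁) + b • (q₂, r₂)).2 = a * r₁ + b * r₂ := rfl
    rw [hsnd]
    apply stmt3_aux_eps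
    intro ε hε
    -- find near-minimizers
    have H1 : ∃ x ∈ A, F x q₁ ≤ ((r₁ + ε : ℝ) : EReal) := by
      have : g q₁ < ((r₁ + ε : ℝ) : EReal) :=
        h₁.trans_lt (by exact_mod_cast (lt_add_of_pos_right r₁ hε))
      rw [hg] at this
      simp only [iInf_lt_iff] at this
      obtain ⟨x, hx, hlt⟩ := this
      exact ⟨x, hx, hlt.le⟩
    have H2 : ∃ x ∈ A, F x q₂ ≤ ((r₂ + ε : ℝ) : EReal) := by
      have : g q₂ < ((r₂ + ε : ℝ) : EReal) :=
        h₂.trans_lt (by exact_mod_cast (lt_add_of_pos_right r₂ hε))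
      rw [hg] at this
      simp only [iInf_lt_iff] at this
      obtain ⟨x, hx, hlt⟩ := this
      exact ⟨x, hx, hlt.le⟩
    obtain ⟨x₁, hx₁A, hx₁⟩ := H1
    obtain ⟨x₂, hx₂A, hx₂⟩ := H2
    have hxA : a • x₁ + b • x₂ ∈ A := hAconv hx₁A hx₂A ha hb hab
    have hgle : g q ≤ F (a • x₁ + b • x₂) q := by
      rw [hg]
      exact iInf₂_le _ hxA
    refine hgle.trans ?_
    rw [hF]
    apply iSup_le
    intro y
    -- per-y estimate
    have e₁ : ((q₁ y : ℝ) : EReal) - f x₁ y ≤ ((r₁ + ε : ℝ) : EReal) :=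
      (le_iSup (fun y => ((q₁ y : ℝ) : EReal) - f x₁ y) y).trans hx₁
    have e₂ : ((q₂ y : ℝ) : EReal) - f x₂ y ≤ ((r₂ + ε : ℝ) : EReal) :=
      (le_iSup (fun y => ((q₂ y : ℝ) : EReal) - f x₂ y) y).trans hx₂
    have m₁ := stmt3_aux_real_below e₁
    have m₂ := stmt3_aux_real_below e₂
    have hcomb := stmt3_aux_conc (hconc y) m₁ m₂ ha hb hab
    have hqy : q y = a * q₁ y + b * q₂ y := by
      simp [hq, ContinuousLinearMap.add_apply, ContinuousLinearMap.smul_apply, smul_eq_mul]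
    calc ((q y : ℝ) : EReal) - f (a • x₁ + b • x₂) y
        ≤ ((q y : ℝ) : EReal) -
            ((a * (q₁ y - (r₁ + ε)) + b * (q₂ y - (r₂ + ε)) : ℝ) : EReal) :=
          EReal.sub_le_sub le_rfl hcomb
      _ = ((q y - (a * (q₁ y - (r₁ + ε)) + b * (q₂ y - (r₂ + ε))) : ℝ) : EReal) :=
          (EReal.coe_sub _ _)
      _ = ((a * r₁ + b * r₂ + ε : ℝ) : EReal) := by
          rw [hqy]
          norm_cast
          have : a * ε + b * ε = ε := by rw [← add_mul, hab, one_mul]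
          ring_nf
          linarith [this]
  · -- Lower semicontinuity
    intro q₀ c hc
    obtain ⟨c', hcc', hc'g⟩ := exists_between hc
    -- key pointwise open estimate
    have key : ∀ x ∈ A, ∃ (U : Set X) (V : Set (Y →L[ℝ] ℝ)), U ∈ 𝓝 x ∧ V ∈ 𝓝 q₀ ∧
        ∀ x' ∈ U, ∀ q ∈ V, c' < F x' q := by
      intro x hx
      have hxF : c' < F x q₀ := by
        refine lt_of_lt_of_le hc'g ?_
        rw [hg]
        exact iInf₂_le _ hx
      rw [hF, lt_iSup_iff] at hxF
      obtain ⟨y, hy⟩ := hxF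
      obtain ⟨d, hd1, hd2⟩ := EReal.exists_between_coe_real hy
      -- f x y < (q₀ y - d)
      have hv : f x y < (((q₀ y : ℝ) - d : ℝ) : EReal) := by
        have gen : ∀ v : EReal, (d : EReal) < ((q₀ y : ℝ) : EReal) - v →
            v < (((q₀ y : ℝ) - d : ℝ) : EReal) := by
          intro v hd2
          induction v with
          | bot => exact EReal.bot_lt_coe _
          | coe s =>
            rw [← EReal.coe_sub, EReal.coe_lt_coe_iff] at hd2
            exact_mod_cast (by linarith : s < q₀ y - d)
          | top => rw [EReal.sub_top] at hd2; exact absurd hd2 (by simp)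
        exact gen _ hd2
      obtain ⟨β, hβ1, hβ2⟩ := EReal.exists_between_coe_real hv
      rw [EReal.coe_lt_coe_iff] at hβ2
      refine ⟨{x' | f x' y < (β : EReal)}, {q | d + β < q y}, husc y x _ hβ1,
        ?_, ?_⟩
      · have : IsOpen {q : Y →L[ℝ] ℝ | d + β < q y} :=
          isOpen_lt continuous_const (continuous_eval_const y)
        exact this.mem_nhds (by simpa using (by linarith : d + β < q₀ y))
      · intro x' hx' q hq
        simp only [Set.mem_setOf_eq] at hx' hq
        have h1 : ((q y : ℝ) : EReal) - (β : EReal) ≤ ((q y : ℝ) : EReal) - f x' y :=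
          EReal.sub_le_sub le_rfl hx'.le
        rw [← EReal.coe_sub] at h1
        have h2 : (d : EReal) < ((q y - β : ℝ) : EReal) := by
          exact_mod_cast (by linarith : d < q y - β)
        have : c' < ((q y : ℝ) : EReal) - f x' y := hd1.trans (h2.trans_le h1)
        refine lt_of_lt_of_le this ?_
        rw [hF]
        exact le_iSup (fun y => ((q y : ℝ) : EReal) - f x' y) y
    choose U V hU hV hUV using key
    obtain ⟨t, ht⟩ := hAc.elim_nhds_subcover' (fun x hx => U x hx) (fun x hx => hU x hx)
    have hVmem : (⋂ x ∈ t, V x x.2) ∈ 𝓝 q₀ :=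
      (Filter.biInter_mem t.finite_toSet).mpr fun x _ => hV x x.2
    filter_upwards [hVmem] with q hqV
    refine lt_of_lt_of_le hcc' ?_
    rw [hg]
    refine le_iInf₂ fun x' hx' => ?_
    obtain ⟨x, hxt, hx'U⟩ : ∃ x ∈ t, x' ∈ U x x.2 := by
      have := ht hx'
      simpa using this
    have hqVx : q ∈ V x x.2 := by
      simp only [Set.mem_iInter] at hqV
      exact hqV x hxt
    exact (hUV x x.2 x' hx'U q hqVx).le
end

section
/- Let X and Y be real normed (or locally convex) spaces, f : X × Y → ℝ ∪ {±∞}, and A ⊆ X a nonempty compact convex set. Suppose that for every y ∈ Y the function x ↦ f(x,y) is concave and upper semicontinuous. Define A₀ = {x ∈ A : f(x,·) is proper, convex, and lower semicontinuous}. Then inf_{y∈Y} sup_{x∈A₀} f(x,y) ≤ max_{x∈A} inf_{y∈Y} f(x,y), where the maximum on the right is attained. -/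
open Filter Topology
open Set

/-- A function is proper if it never takes the value `−∞` and is not identically `+∞`. -/
def IsProperE {Y : Type*} (g : Y → EReal) : Prop :=
  (∀ y, g y ≠ ⊥) ∧ ∃ y, g y ≠ ⊤



lemma usc_iInf {X Y : Type*} [TopologicalSpace X] [Nonempty Y] (f : X → Y → EReal)
    (husc : ∀ y, UpperSemicontinuous (fun x => f x y)) :
    UpperSemicontinuous (fun x => ⨅ y, f x y) := by
  intro x c hc
  obtain ⟨y, hy⟩ := iInf_lt_iff.1 hc
  filter_upwards [husc y x c hy] with x' hx'
  exact lt_of_le_of_lt (iInf_le _ y) hx'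

lemma exists_max_usc {X : Type*} [TopologicalSpace X] [T2Space X] (g : X → EReal)
    (hg : UpperSemicontinuous g) {A : Set X} (hA : A.Nonempty) (hAc : IsCompact A) :
    ∃ x₀ ∈ A, ∀ x ∈ A, g x ≤ g x₀ := by
  set S : EReal := ⨆ x ∈ A, g x with hS
  rcases eq_or_lt_of_le (bot_le : (⊥:EReal) ≤ S) with hbot | hlt
  · obtain ⟨x₀, hx₀⟩ := hA
    refine ⟨x₀, hx₀, fun x hx => ?_⟩
    have : g x ≤ S := le_biSup _ hx
    rw [← hbot] at this
    simpa [le_bot_iff.1 this] using bot_le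
  · -- S > ⊥; use FIP
    set ι := {c : EReal // c < S}
    have : Nonempty ι := ⟨⟨⊥, hlt⟩⟩
    set K : ι → Set X := fun c => A ∩ g ⁻¹' Ici c.1 with hK
    have hcl : ∀ c : ι, IsClosed (K c) := fun c =>
      (hAc.isClosed).inter (hg.isClosed_preimage c.1)
    have hcp : ∀ c : ι, IsCompact (K c) := fun c => hAc.inter_right (hg.isClosed_preimage c.1)
    have hne : ∀ c : ι, (K c).Nonempty := by
      rintro ⟨c, hc⟩
      rw [hS] at hc
      simp only [lt_iSup_iff] at hc
      obtain ⟨x, hxA, hx⟩ := hc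
      exact ⟨x, hxA, le_of_lt hx⟩
    have hdir : Directed (· ⊇ ·) K := by
      rintro ⟨c, hc⟩ ⟨d, hd⟩
      refine ⟨⟨max c d, max_lt hc hd⟩, fun x hx => ⟨hx.1, ?_⟩, fun x hx => ⟨hx.1, ?_⟩⟩
      · exact le_trans (le_max_left c d) hx.2
      · exact le_trans (le_max_right c d) hx.2
    obtain ⟨x₀, hx₀⟩ := IsCompact.nonempty_iInter_of_directed_nonempty_isCompact_isClosed
      K hdir hne hcp hcl
    simp only [mem_iInter] at hx₀
    have hx₀A : x₀ ∈ A := (hx₀ ⟨⊥, hlt⟩).1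
    refine ⟨x₀, hx₀A, fun x hx => ?_⟩
    have h1 : g x ≤ S := le_biSup _ hx
    have h2 : S ≤ g x₀ := le_of_forall_lt_imp_le_of_dense fun c hc => (hx₀ ⟨c, hc⟩).2
    exact h1.trans h2


lemma key_lemma {X Y : Type*} [NormedAddCommGroup X] [NormedSpace ℝ X]
    [NormedAddCommGroup Y] [NormedSpace ℝ Y]
    (f : X → Y → EReal) (A A₀ : Set X) (hAc : IsCompact A) (hAconv : Convex ℝ A)
    (hconc : ∀ y, Convex ℝ {p : X × ℝ | (p.2 : EReal) ≤ f p.1 y})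
    (husc : ∀ y, UpperSemicontinuous (fun x => f x y))
    (hsub : A₀ ⊆ A)
    (h0 : ∀ x ∈ A₀, (∀ y, f x y ≠ ⊥) ∧ Convex ℝ {p : Y × ℝ | f x p.1 ≤ (p.2 : EReal)})
    (hne : A₀.Nonempty)
    (c : ℝ) (hc : ∀ x ∈ A, ∃ y, f x y < (c : EReal)) :
    ∃ ybar : Y, ∀ x ∈ A₀, f x ybar ≤ (c : EReal) := by
  classical
  obtain ⟨xs, hxs⟩ := hne
  -- finite subcover
  have hcover : A ⊆ ⋃ y : Y, {x | f x y < (c : EReal)} := by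
    intro x hx
    obtain ⟨y, hy⟩ := hc x hx
    exact mem_iUnion.2 ⟨y, hy⟩
  obtain ⟨t, ht⟩ := hAc.elim_finite_subcover (fun y : Y => {x | f x y < (c : EReal)})
    (fun y => (husc y).isOpen_preimage c) hcover
  have htne : Nonempty ↥t := by
    obtain ⟨y, hy, -⟩ := mem_iUnion₂.1 (ht (hsub hxs))
    exact ⟨⟨y, hy⟩⟩
  -- separation setup
  set C : Set (↥t → ℝ) := {u | ∃ x ∈ A, ∀ i : ↥t, (u i : EReal) ≤ f x i.1} with hCdef
  set s : Set (↥t → ℝ) := {u | ∀ i : ↥t, c < u i} with hsdef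
  have hsconv : Convex ℝ s := by
    have : s = Set.pi univ (fun _ : ↥t => Ioi c) := by
      ext u
      simp only [hsdef, Set.mem_pi, Set.mem_univ, forall_true_left, mem_Ioi, mem_setOf_eq]
    rw [this]
    exact convex_pi (fun i _ => convex_Ioi c)
  have hsopen : IsOpen s := by
    have : s = Set.pi univ (fun _ : ↥t => Ioi c) := by
      ext u
      simp only [hsdef, Set.mem_pi, Set.mem_univ, forall_true_left, mem_Ioi, mem_setOf_eq]
    rw [this]
    exact isOpen_set_pi finite_univ (fun i _ => isOpen_Ioi)
  have hCconv : Convex ℝ C := by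
    rintro u ⟨x, hx, hu⟩ v ⟨x', hx', hv⟩ a b ha hb hab
    refine ⟨a • x + b • x', hAconv hx hx' ha hb hab, fun i => ?_⟩
    have := (hconc i.1) (show ((x, u i) : X × ℝ) ∈ _ from hu i)
      (show ((x', v i) : X × ℝ) ∈ _ from hv i) ha hb hab
    simpa using this
  have hdisj : Disjoint s C := by
    rw [Set.disjoint_left]
    rintro u hus ⟨x, hx, hu⟩
    obtain ⟨y, hy, hxy⟩ := mem_iUnion₂.1 (ht hx)
    have h1 : (c : EReal) < (u ⟨y, hy⟩ : EReal) := by exact_mod_cast hus ⟨y, hy⟩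
    exact absurd ((h1.trans_le (hu ⟨y, hy⟩)).trans hxy) (lt_irrefl _)
  obtain ⟨φ, r, hφs, hφC⟩ := geometric_hahn_banach_open hsconv hsopen hCconv hdisj
  -- coordinates of φ
  set e : ↥t → (↥t → ℝ) := fun i => fun j => if i = j then 1 else 0 with hedef
  set μ : ↥t → ℝ := fun i => φ (e i) with hμdef
  have hφeq : ∀ u : ↥t → ℝ, φ u = ∑ i, u i * μ i := by
    intro u
    have := LinearMap.pi_apply_eq_sum_univ (φ : (↥t → ℝ) →ₗ[ℝ] ℝ) u
    simpa [hμdef, hedef, smul_eq_mul] using this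
  -- C is nonempty
  have hCne : C.Nonempty := by
    refine ⟨fun i => if f xs i.1 = ⊤ then 0 else (f xs i.1).toReal, xs, hsub hxs, fun i => ?_⟩
    by_cases h : f xs i.1 = ⊤
    · simp [h]
    · simp only [h, if_false]
      rw [EReal.coe_toReal h ((h0 xs hxs).1 i.1)]
  -- each μ i is nonpositive
  have hμnonpos : ∀ i, μ i ≤ 0 := by
    intro i
    by_contra h
    push_neg at h
    set N : ℝ := max 0 ((r - φ (fun _ => c + 1)) / μ i) with hN
    have hN0 : 0 ≤ N := le_max_left _ _
    have hmem : ((fun _ => c + 1) + N • e i) ∈ s := by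
      intro j
      have heval : (((fun _ => c + 1) + N • e i : ↥t → ℝ)) j = c + 1 + N * (if i = j then 1 else 0) := by
        simp only [hedef, Pi.add_apply, Pi.smul_apply, smul_eq_mul]
      rw [heval]
      by_cases hij : i = j
      · rw [if_pos hij]; linarith
      · rw [if_neg hij]; linarith
    have h1 : φ ((fun _ => c + 1) + N • e i) < r := hφs _ hmem
    rw [map_add, map_smul, smul_eq_mul] at h1
    have h2 : (r - φ (fun _ => c + 1)) ≤ N * μ i := by
      have : (r - φ (fun _ => c + 1)) / μ i ≤ N := le_max_right _ _
      calc r - φ (fun _ => c + 1) = ((r - φ (fun _ => c + 1)) / μ i) * μ i := by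
            field_simp
        _ ≤ N * μ i := by
            apply mul_le_mul_of_nonneg_right this (le_of_lt h)
    linarith
  -- not all μ i are zero
  have hμne : ¬ (∀ i, μ i = 0) := by
    intro hall
    have hφ0 : ∀ u : ↥t → ℝ, φ u = 0 := by
      intro u; rw [hφeq]; simp [hall]
    obtain ⟨u, hu⟩ := hCne
    have h1 : (0:ℝ) < r := by
      have := hφs (fun _ => c + 1) (fun i => by simp)
      rwa [hφ0] at this
    have h2 : r ≤ 0 := by
      have := hφC u hu
      rwa [hφ0] at this
    linarith
  -- the normalization
  set S : ℝ := ∑ i, (-μ i) with hSdef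
  have hSpos : 0 < S := by
    obtain ⟨i, hi⟩ := not_forall.1 hμne
    refine Finset.sum_pos' (fun j _ => by linarith [hμnonpos j]) ⟨i, Finset.mem_univ i, ?_⟩
    have := hμnonpos i
    have : μ i < 0 := lt_of_le_of_ne this hi
    linarith
  have hμS : ∑ i, μ i = -S := by
    rw [hSdef]; simp
  have hrc : c * ∑ i, μ i ≤ r := by
    by_contra hcon
    push_neg at hcon
    set ε : ℝ := (c * ∑ i, μ i - r) / S with hε
    have hεpos : 0 < ε := div_pos (by linarith) hSpos
    have hεS : ε * S = c * ∑ i, μ i - r := by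
      rw [hε]; field_simp
    have hmem : (fun _ => c + ε) ∈ s := fun i => by
      show c < c + ε; linarith
    have h1 : φ (fun _ => c + ε) < r := hφs _ hmem
    rw [hφeq] at h1
    have h2 : ∑ i : ↥t, (c + ε) * μ i = (c + ε) * ∑ i, μ i := by
      rw [Finset.mul_sum]
    rw [h2] at h1
    have h3 : (c + ε) * ∑ i, μ i = c * ∑ i, μ i + ε * (-S) := by
      rw [hμS]; ring
    rw [h3] at h1
    linarith
  set lam : ↥t → ℝ := fun i => (-μ i) / S with hlam
  have hlam_nonneg : ∀ i, 0 ≤ lam i := fun i => div_nonneg (by linarith [hμnonpos i]) hSpos.le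
  have hlam_sum : ∑ i, lam i = 1 := by
    rw [hlam, ← Finset.sum_div, ← hSdef, div_self hSpos.ne']
  have hkey : ∀ x ∈ A, ∀ u : ↥t → ℝ, (∀ i, (u i : EReal) ≤ f x i.1) →
      ∑ i, lam i * u i ≤ c := by
    intro x hx u hu
    have h1 : r ≤ φ u := hφC u ⟨x, hx, hu⟩
    rw [hφeq] at h1
    have h3 : ∑ i, u i * (-μ i) ≤ c * S := by
      have e1 : ∑ i, u i * (-μ i) = -(∑ i, u i * μ i) := by
        simp [mul_neg]
      have e2 : c * ∑ i, μ i = -(c * S) := by rw [hμS]; ring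
      linarith
    calc ∑ i, lam i * u i = (∑ i, u i * (-μ i)) / S := by
          rw [Finset.sum_div]
          exact Finset.sum_congr rfl fun i _ => by rw [hlam]; ring
      _ ≤ c * S / S := (div_le_div_iff_of_pos_right hSpos).2 h3
      _ = c := by field_simp
  -- the candidate point
  refine ⟨∑ i, lam i • (i.1 : Y), ?_⟩
  intro x hx
  obtain ⟨hxbot, hxconv⟩ := h0 x hx
  set d : ↥t → ℝ := fun i => if f x i.1 = ⊤ then 0 else (f x i.1).toReal with hd
  have hdle : ∀ i, (d i : EReal) ≤ f x i.1 := by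
    intro i
    by_cases hh : f x i.1 = ⊤
    · simp [hd, hh]
    · simp only [hd, hh, if_false]
      rw [EReal.coe_toReal hh (hxbot i.1)]
  have hdc : ∑ i, lam i * d i ≤ c := hkey x (hsub hx) d hdle
  -- lam i ≠ 0 forces f x i ≠ ⊤
  have htop : ∀ i, lam i ≠ 0 → f x i.1 ≠ ⊤ := by
    intro i0 hl0 htopeq
    have hlpos : 0 < lam i0 := lt_of_le_of_ne (hlam_nonneg i0) (Ne.symm hl0)
    set B : ℝ := ∑ j ∈ Finset.univ.erase i0, lam j * d j with hB
    have hBd : ∀ M : ℝ, lam i0 * M + B ≤ c := by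
      intro M
      set uM : ↥t → ℝ := Function.update d i0 M with huM
      have huMle : ∀ i, (uM i : EReal) ≤ f x i.1 := by
        intro i
        by_cases hi : i = i0
        · subst hi
          rw [huM, Function.update_self, htopeq]
          exact le_top
        · rw [huM, Function.update_of_ne hi]
          exact hdle i
      have hk := hkey x (hsub hx) uM huMle
      have hsplit : ∑ i, lam i * uM i = lam i0 * M + B := by
        rw [← Finset.add_sum_erase _ (fun i => lam i * uM i) (Finset.mem_univ i0)]
        congr 1
        · rw [huM, Function.update_self]
        · refine Finset.sum_congr rfl fun j hj => ?_
          rw [huM, Function.update_of_ne (Finset.ne_of_mem_erase hj)]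
      linarith [hsplit ▸ hk]
    have h1 := hBd ((c - B + 1) / lam i0)
    have h2 : lam i0 * ((c - B + 1) / lam i0) = c - B + 1 := by
      field_simp
    linarith
  -- convex combination in the epigraph of f x
  set t' : Finset ↥t := Finset.univ.filter (fun i : ↥t => lam i ≠ 0) with ht'
  have hmem : (∑ i ∈ t', lam i • (((i.1 : Y), (f x i.1).toReal) : Y × ℝ)) ∈
      {p : Y × ℝ | f x p.1 ≤ (p.2 : EReal)} := by
    refine hxconv.sum_mem (fun i _ => hlam_nonneg i) ?_ ?_
    · rw [ht', Finset.sum_filter_ne_zero]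
      exact hlam_sum
    · intro i hi
      have hine : lam i ≠ 0 := (Finset.mem_filter.1 hi).2
      show f x i.1 ≤ (((f x i.1).toReal : ℝ) : EReal)
      rw [EReal.coe_toReal (htop i hine) (hxbot i.1)]
  have hfst : (∑ i ∈ t', lam i • (((i.1 : Y), (f x i.1).toReal) : Y × ℝ)).1
      = ∑ i, lam i • (i.1 : Y) := by
    rw [Prod.fst_sum]
    have e1 : ∀ i : ↥t, (lam i • (((i.1 : Y), (f x i.1).toReal) : Y × ℝ)).1
        = lam i • (i.1 : Y) := fun i => rfl
    rw [Finset.sum_congr rfl fun i _ => e1 i]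
    exact Finset.sum_filter_of_ne fun i _ hne h0' => hne (by rw [h0', zero_smul])
  have hsnd : (∑ i ∈ t', lam i • (((i.1 : Y), (f x i.1).toReal) : Y × ℝ)).2 ≤ c := by
    rw [Prod.snd_sum]
    have e1 : ∀ i ∈ t', (lam i • (((i.1 : Y), (f x i.1).toReal) : Y × ℝ)).2
        = lam i * d i := by
      intro i hi
      have hine : lam i ≠ 0 := (Finset.mem_filter.1 hi).2
      show lam i * (f x i.1).toReal = lam i * d i
      rw [hd]
      simp only [htop i hine, if_false]
    calc ∑ i ∈ t', (lam i • (((i.1 : Y), (f x i.1).toReal) : Y × ℝ)).2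
        = ∑ i ∈ t', lam i * d i := Finset.sum_congr rfl e1
      _ = ∑ i, lam i * d i :=
          Finset.sum_filter_of_ne fun i _ hne h0' => hne (by rw [h0', zero_mul])
      _ ≤ c := hdc
  have hfin : f x (∑ i, lam i • (i.1 : Y)) ≤
      ((∑ i ∈ t', lam i • (((i.1 : Y), (f x i.1).toReal) : Y × ℝ)).2 : EReal) := by
    rw [← hfst]
    exact hmem
  refine hfin.trans ?_
  exact_mod_cast EReal.coe_le_coe_iff.2 hsnd

/-- relaxed minimax inequality with
`A₀ = {x ∈ A : f(x,·) proper convex lsc}`; the max over `A` is attained. -/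
theorem stmt4 {X Y : Type*} [NormedAddCommGroup X] [NormedSpace ℝ X]
    [NormedAddCommGroup Y] [NormedSpace ℝ Y]
    (f : X → Y → EReal) (A : Set X) (hA : A.Nonempty) (hAc : IsCompact A)
    (hAconv : Convex ℝ A)
    (hconc : ∀ y, IsConcaveEFn (fun x => f x y))
    (husc : ∀ y, UpperSemicontinuous (fun x => f x y)) :
    ∃ x₀ ∈ A, (⨅ y, f x₀ y) = (⨆ x ∈ A, ⨅ y, f x y) ∧
      (⨅ y, ⨆ x ∈ {x ∈ A |
          IsProperE (f x) ∧ IsConvexEFn (f x) ∧ LowerSemicontinuous (f x)}, f x y)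
        ≤ ⨅ y, f x₀ y := by
  classical
  have hNY : Nonempty Y := ⟨0⟩
  obtain ⟨x₀, hx₀A, hmax⟩ := exists_max_usc (fun x => ⨅ y, f x y) (usc_iInf f husc) hA hAc
  have heq : (⨅ y, f x₀ y) = ⨆ x ∈ A, ⨅ y, f x y :=
    le_antisymm (le_biSup (fun x => ⨅ y, f x y) hx₀A) (iSup₂_le hmax)
  refine ⟨x₀, hx₀A, heq, ?_⟩
  set A₀ : Set X :=
    {x ∈ A | IsProperE (f x) ∧ IsConvexEFn (f x) ∧ LowerSemicontinuous (f x)} with hA₀def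
  by_cases hA₀ne : A₀.Nonempty
  · refine le_of_forall_gt_imp_ge_of_dense fun a ha => ?_
    obtain ⟨c, hc1, hc2⟩ := EReal.exists_between_coe_real ha
    have hcc : ∀ x ∈ A, ∃ y, f x y < (c : EReal) := by
      intro x hx
      have h1 : (⨅ y, f x y) < (c : EReal) := lt_of_le_of_lt (hmax x hx) hc1
      exact iInf_lt_iff.1 h1
    obtain ⟨ybar, hybar⟩ := key_lemma f A A₀ hAc hAconv (fun y => hconc y) husc
      (fun x hx => hx.1) (fun x hx => ⟨hx.2.1.1, hx.2.2.1⟩) hA₀ne c hcc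
    calc (⨅ y, ⨆ x ∈ A₀, f x y) ≤ ⨆ x ∈ A₀, f x ybar := iInf_le _ ybar
      _ ≤ (c : EReal) := iSup₂_le hybar
      _ ≤ a := hc2.le
  · have hbot : (⨆ x ∈ A₀, f x (0 : Y)) = ⊥ := by
      rw [Set.not_nonempty_iff_eq_empty.1 hA₀ne]
      simp
    calc (⨅ y, ⨆ x ∈ A₀, f x y) ≤ ⨆ x ∈ A₀, f x (0 : Y) := iInf_le _ 0
      _ = ⊥ := hbot
      _ ≤ ⨅ y, f x₀ y := bot_le
end

section
/- Let X and Y be real normed (or locally convex) spaces, A ⊆ X a nonempty compact convex set, B ⊆ Y a nonempty convex set, and f : X × Y → ℝ ∪ {±∞} with A × B ⊆ f⁻¹(ℝ) (f is finite on A × B). Suppose for every y ∈ B the function x ↦ f(x,y) is concave and upper semicontinuous. Let A₁ = {x ∈ A : f(x,·) is convex}. Then inf_{y∈B} sup_{x∈A₁} f(x,y) ≤ max_{x∈A} inf_{y∈B} f(x,y). -/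
open Filter Topology

/-- An upper semicontinuous `EReal`-valued function attains its maximum on a
nonempty compact set. -/
lemma usc_exists_max {X : Type*} [TopologicalSpace X] {A : Set X} (hAc : IsCompact A)
    (hA : A.Nonempty) {h : X → EReal} (hu : UpperSemicontinuous h) :
    ∃ x₀ ∈ A, ∀ x ∈ A, h x ≤ h x₀ := by
  by_contra hcon
  push_neg at hcon
  set S : EReal := ⨆ x ∈ A, h x with hS
  have hlt : ∀ x ∈ A, h x < S := by
    intro x hx
    obtain ⟨x', hx', hxx'⟩ := hcon x hx
    exact lt_of_lt_of_le hxx' (le_biSup _ hx')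
  -- open cover indexed by values below S
  have hcover : A ⊆ ⋃ c : {c : EReal // c < S}, h ⁻¹' Set.Iio c.1 := by
    intro x hx
    obtain ⟨c, hc1, hc2⟩ := exists_between (hlt x hx)
    exact Set.mem_iUnion.2 ⟨⟨c, hc2⟩, hc1⟩
  obtain ⟨t, ht⟩ := hAc.elim_finite_subcover _ (fun c : {c : EReal // c < S} => hu.isOpen_preimage c.1) hcover
  obtain ⟨x, hx⟩ := hA
  obtain ⟨c₀, hc₀t, _⟩ := Set.mem_iUnion₂.1 (ht hx)
  have htne : t.Nonempty := ⟨c₀, hc₀t⟩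
  set cm : EReal := t.sup' htne (fun c => c.1) with hcm
  have hScm : S ≤ cm := by
    refine iSup₂_le fun x hx => ?_
    obtain ⟨c, hct, hxc⟩ := Set.mem_iUnion₂.1 (ht hx)
    exact le_trans (le_of_lt hxc) (Finset.le_sup' (fun c : {c : EReal // c < S} => c.1) hct)
  have hcmS : cm < S := (Finset.sup'_lt_iff htne).2 fun c _ => c.2
  exact absurd (hScm.trans_lt hcmS) (lt_irrefl S)

/-- Fan-type finite lemma: if `g i` are concave (`EReal`-epigraph sense) on a convex
set `A` and at every point of `A` some `g i` is `< c`, then some convex combination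
of the `g i` is `≤ c` everywhere on `A`. -/
lemma fan_aux {X : Type*} [AddCommGroup X] [Module ℝ X]
    {ι : Type*} [Fintype ι] [Nonempty ι]
    {A : Set X} (hAconv : Convex ℝ A) (hA : A.Nonempty)
    (g : ι → X → EReal) (c : ℝ)
    (hconc : ∀ i, Convex ℝ {p : X × ℝ | (p.2 : EReal) ≤ g i p.1})
    (hfin : ∀ i, ∀ x ∈ A, g i x ≠ ⊥ ∧ g i x ≠ ⊤)
    (hlt : ∀ x ∈ A, ∃ i, g i x < (c : EReal)) :
    ∃ μ : ι → ℝ, (∀ i, 0 ≤ μ i) ∧ ∑ i, μ i = 1 ∧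
      ∀ x ∈ A, ∑ i, μ i * (g i x).toReal ≤ c := by
  classical
  set C : Set (ι → ℝ) := {u | ∃ x ∈ A, ∀ i, (u i : EReal) ≤ g i x} with hCdef
  have hCconv : Convex ℝ C := by
    rintro u ⟨x, hx, hux⟩ v ⟨x', hx', hvx'⟩ a b ha hb hab
    refine ⟨a • x + b • x', hAconv hx hx' ha hb hab, fun i => ?_⟩
    have key := hconc i (hux i : ((x, u i) : X × ℝ) ∈ _) (hvx' i : ((x', v i) : X × ℝ) ∈ _)
      ha hb hab
    simp only [Prod.smul_mk, Prod.mk_add_mk, Set.mem_setOf_eq, smul_eq_mul] at key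
    simpa [smul_eq_mul] using key
  have hmemC : ∀ x ∈ A, (fun i => (g i x).toReal) ∈ C := by
    intro x hx
    exact ⟨x, hx, fun i => le_of_eq (EReal.coe_toReal (hfin i x hx).2 (hfin i x hx).1)⟩
  have hCne : C.Nonempty := by
    obtain ⟨x, hx⟩ := hA
    exact ⟨_, hmemC x hx⟩
  set D : Set (ι → ℝ) := {u | ∀ i, c < u i} with hDdef
  have hD_eq : D = ⋂ i, (fun u : ι → ℝ => u i) ⁻¹' Set.Ioi c := by
    ext u; simp [hDdef, Set.mem_iInter]
  have hDopen : IsOpen D := by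
    rw [hD_eq]
    exact isOpen_iInter_of_finite fun i => isOpen_Ioi.preimage (continuous_apply i)
  have hDconv : Convex ℝ D := by
    rw [hD_eq]
    exact convex_iInter fun i =>
      convex_halfSpace_gt (⟨fun u v => rfl, fun r u => rfl⟩ : IsLinearMap ℝ _) c
  have hdisj : Disjoint D C := by
    rw [Set.disjoint_left]
    rintro u hu ⟨x, hx, hux⟩
    obtain ⟨i, hi⟩ := hlt x hx
    have : (c : EReal) < g i x :=
      lt_of_lt_of_le (by exact_mod_cast hu i) (hux i)
    exact absurd hi this.asymm
  obtain ⟨φ, α, hφD, hφC⟩ := geometric_hahn_banach_open hDconv hDopen hCconv hdisj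
  set e : ι → (ι → ℝ) := fun i j => if i = j then (1 : ℝ) else 0 with he
  set lam : ι → ℝ := fun i => φ (e i) with hlam
  have hrep : ∀ u : ι → ℝ, φ u = ∑ i, u i * lam i := by
    intro u
    calc φ u = φ (∑ i, u i • e i) := by rw [← pi_eq_sum_univ u]
    _ = ∑ i, u i * lam i := by
        rw [map_sum]
        exact Finset.sum_congr rfl fun i _ => by rw [map_smul, smul_eq_mul]
  set w : ι → ℝ := fun _ => c + 1 with hw
  have hwD : w ∈ D := fun i => by simp [hw]
  have hφw : φ w < α := hφD w hwD
  have hlam_nonpos : ∀ i, lam i ≤ 0 := by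
    intro i
    by_contra hpos
    push_neg at hpos
    set T : ℝ := (α - φ w) / lam i with hT
    have hT0 : 0 < T := div_pos (by linarith) hpos
    have hmem : w + T • e i ∈ D := by
      intro j
      simp only [Pi.add_apply, Pi.smul_apply, smul_eq_mul, hw, he]
      by_cases hij : i = j <;> simp [hij] <;> nlinarith
    have hlt' := hφD _ hmem
    rw [map_add, map_smul, smul_eq_mul] at hlt'
    have : T * lam i = α - φ w := div_mul_cancel₀ _ hpos.ne'
    linarith
  set S : ℝ := ∑ i, lam i with hSdef
  have hS0 : S ≤ 0 := Finset.sum_nonpos fun i _ => hlam_nonpos i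
  have hcS : c * S ≤ α := by
    have htend : Tendsto (fun ε : ℝ => (c + ε) * S) (𝓝[>] 0) (𝓝 (c * S)) := by
      have h1 : Tendsto (fun ε : ℝ => (c + ε) * S) (𝓝 0) (𝓝 ((c + 0) * S)) :=
        ((continuous_const.add continuous_id).mul continuous_const).tendsto 0
      simpa using h1.mono_left nhdsWithin_le_nhds
    refine le_of_tendsto htend ?_
    filter_upwards [self_mem_nhdsWithin] with ε hε
    have hmem : (fun _ : ι => c + ε) ∈ D := fun i => by
      simp [lt_add_iff_pos_right, (Set.mem_Ioi.1 hε)]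
    have h2 := hφD _ hmem
    rw [hrep] at h2
    have h3 : ∑ i, (c + ε) * lam i = (c + ε) * S := by rw [hSdef, Finset.mul_sum]
    linarith [h2, h3.symm ▸ h2]
  have hSneg : S < 0 := by
    rcases lt_or_eq_of_le hS0 with h | h
    · exact h
    · exfalso
      have hall := (Finset.sum_eq_zero_iff_of_nonpos fun i _ => hlam_nonpos i).1 (by rw [← hSdef]; exact h)
      obtain ⟨u₀, hu₀⟩ := hCne
      have h1 : α ≤ φ u₀ := hφC u₀ hu₀
      have h2 : φ u₀ = 0 := by
        rw [hrep]
        exact Finset.sum_eq_zero fun i hi => by rw [hall i hi, mul_zero]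
      have h4 : φ w = 0 := by
        rw [hrep]
        exact Finset.sum_eq_zero fun i hi => by rw [hall i hi, mul_zero]
      linarith
  refine ⟨fun i => lam i / S, fun i => ?_, ?_, ?_⟩
  · have := div_nonneg (neg_nonneg.2 (hlam_nonpos i)) (neg_nonneg.2 hS0)
    rwa [neg_div_neg_eq] at this
  · rw [← Finset.sum_div, ← hSdef, div_self hSneg.ne]
  · intro x hx
    have hαP : α ≤ ∑ i, (g i x).toReal * lam i := by
      have := hφC _ (hmemC x hx)
      rwa [hrep] at this
    have heq : ∑ i, lam i / S * (g i x).toReal = (∑ i, (g i x).toReal * lam i) / S := by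
      rw [Finset.sum_div]
      exact Finset.sum_congr rfl fun i _ => by ring
    rw [heq, div_le_iff_of_neg hSneg]
    linarith

/-- relaxed minimax inequality for `f` finite on `A × B`, with
`A₁ = {x ∈ A : f(x,·) convex}`; the max over `A` is attained. -/
theorem stmt5 {X Y : Type*} [NormedAddCommGroup X] [NormedSpace ℝ X]
    [NormedAddCommGroup Y] [NormedSpace ℝ Y]
    (f : X → Y → EReal) (A : Set X) (B : Set Y)
    (hA : A.Nonempty) (hAc : IsCompact A) (hAconv : Convex ℝ A)
    (hB : B.Nonempty) (hBconv : Convex ℝ B)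
    (hfin : ∀ x ∈ A, ∀ y ∈ B, f x y ≠ ⊥ ∧ f x y ≠ ⊤)
    (hconc : ∀ y ∈ B, IsConcaveEFn (fun x => f x y))
    (husc : ∀ y ∈ B, UpperSemicontinuous (fun x => f x y)) :
    ∃ x₀ ∈ A, (⨅ y ∈ B, f x₀ y) = (⨆ x ∈ A, ⨅ y ∈ B, f x y) ∧
      (⨅ y ∈ B, ⨆ x ∈ {x ∈ A | IsConvexEFn (f x)}, f x y) ≤ ⨅ y ∈ B, f x₀ y := by
  classical
  set h : X → EReal := fun x => ⨅ y ∈ B, f x y with hh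
  have husch : UpperSemicontinuous h :=
    upperSemicontinuous_biInf fun y hy => husc y hy
  obtain ⟨x₀, hx₀A, hmax⟩ := usc_exists_max hAc hA husch
  have heq : h x₀ = ⨆ x ∈ A, h x :=
    le_antisymm (le_biSup _ hx₀A) (iSup₂_le hmax)
  refine ⟨x₀, hx₀A, heq, ?_⟩
  show (⨅ y ∈ B, ⨆ x ∈ {x ∈ A | IsConvexEFn (f x)}, f x y) ≤ h x₀
  refine le_of_forall_gt_imp_ge_of_dense fun c hc => ?_
  obtain ⟨c', hc1, hc2⟩ := exists_between hc
  have hc'bot : c' ≠ ⊥ := (bot_le.trans_lt hc1).ne'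
  have hc'top : c' ≠ ⊤ := (hc2.trans_le le_top).ne
  set r : ℝ := c'.toReal with hr
  have hrc' : (r : EReal) = c' := EReal.coe_toReal hc'top hc'bot
  -- each x in A has some y in B with f x y < r
  have hexists : ∀ x ∈ A, ∃ y ∈ B, f x y < (r : EReal) := by
    intro x hx
    have : h x < (r : EReal) := by
      rw [hrc']
      exact (hmax x hx).trans_lt hc1
    simpa [hh, iInf_lt_iff] using this
  -- closed sets and finite subfamily
  set Z : B → Set X := fun y => {x | (r : EReal) ≤ f x y.1} with hZ
  have hZc : ∀ y : B, IsClosed (Z y) := by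
    intro y
    have : Z y = ((fun x => f x y.1) ⁻¹' Set.Iio (r : EReal))ᶜ := by
      ext x; simp [hZ, not_lt]
    rw [this]
    exact ((husc y.1 y.2).isOpen_preimage _).isClosed_compl
  have hempty : A ∩ ⋂ y : B, Z y = ∅ := by
    rw [Set.eq_empty_iff_forall_notMem]
    rintro x ⟨hxA, hxZ⟩
    obtain ⟨y, hyB, hy⟩ := hexists x hxA
    exact absurd hy (not_lt.2 (Set.mem_iInter.1 hxZ ⟨y, hyB⟩))
  obtain ⟨t, ht⟩ := hAc.elim_finite_subfamily_closed Z hZc hempty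
  have htlt : ∀ x ∈ A, ∃ y ∈ t, f x (y : B).1 < (r : EReal) := by
    intro x hx
    by_contra hcon
    push_neg at hcon
    have : x ∈ A ∩ ⋂ y ∈ t, Z y :=
      ⟨hx, Set.mem_iInter₂.2 fun y hy => hcon y hy⟩
    rw [ht] at this
    exact this
  obtain ⟨x1, hx1⟩ := id hA
  obtain ⟨y₀, hy₀t, _⟩ := htlt x1 hx1
  haveI : Nonempty {y // y ∈ t} := ⟨⟨y₀, hy₀t⟩⟩
  -- apply the Fan lemma
  obtain ⟨μ, hμ0, hμ1, hμle⟩ := fan_aux (ι := {y // y ∈ t}) hAconv hA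
    (fun i x => f x i.1.1) r
    (fun i => hconc i.1.1 i.1.2)
    (fun i x hx => hfin x hx i.1.1 i.1.2)
    (fun x hx => by
      obtain ⟨y, hyt, hy⟩ := htlt x hx
      exact ⟨⟨y, hyt⟩, hy⟩)
  set ystar : Y := ∑ i : {y // y ∈ t}, μ i • i.1.1 with hystar
  have hystarB : ystar ∈ B :=
    hBconv.sum_mem (fun i _ => hμ0 i) (by simpa using hμ1) fun i _ => i.1.2
  -- sup over A₁ at ystar is at most r
  have hsup : (⨆ x ∈ {x ∈ A | IsConvexEFn (f x)}, f x ystar) ≤ (r : EReal) := by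
    refine iSup₂_le fun x hx => ?_
    obtain ⟨hxA, hxconv⟩ := hx
    have hsum := hxconv.sum_mem (t := Finset.univ) (fun i _ => hμ0 i) (by simpa using hμ1)
      (fun (i : {y // y ∈ t}) _ =>
        (by
          show f x i.1.1 ≤ (((f x i.1.1).toReal : ℝ) : EReal)
          rw [EReal.coe_toReal (hfin x hxA i.1.1 i.1.2).2 (hfin x hxA i.1.1 i.1.2).1]
          : (( i.1.1, (f x i.1.1).toReal) : Y × ℝ) ∈ {p : Y × ℝ | f x p.1 ≤ (p.2 : EReal)}))
    simp only [Set.mem_setOf_eq] at hsum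
    have hfst : (∑ i : {y // y ∈ t}, μ i • ((i.1.1, (f x i.1.1).toReal) : Y × ℝ)).1 = ystar := by
      rw [Prod.fst_sum]; rfl
    have hsnd : (∑ i : {y // y ∈ t}, μ i • ((i.1.1, (f x i.1.1).toReal) : Y × ℝ)).2
        = ∑ i : {y // y ∈ t}, μ i * (f x i.1.1).toReal := by
      rw [Prod.snd_sum]; rfl
    rw [hfst, hsnd] at hsum
    refine hsum.trans ?_
    exact_mod_cast EReal.coe_le_coe_iff.2 (hμle x hxA)
  calc (⨅ y ∈ B, ⨆ x ∈ {x ∈ A | IsConvexEFn (f x)}, f x y)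
      ≤ ⨆ x ∈ {x ∈ A | IsConvexEFn (f x)}, f x ystar := biInf_le _ hystarB
    _ ≤ (r : EReal) := hsup
    _ ≤ c := by rw [hrc']; exact hc2.le
end

section
/- Let X and Y be real normed spaces, A ⊆ X nonempty compact convex, B ⊆ Y nonempty convex, and f : X × Y → ℝ a real-valued function such that x ↦ f(x,y) is concave and upper semicontinuous for each y ∈ B, and y ↦ f(x,y) is convex for each x ∈ A. Then sup_{x∈A} inf_{y∈B} f(x,y) = inf_{y∈B} sup_{x∈A} f(x,y), and the supremum on the left is attained. -/
/-!
For real `r` below `c = inf_y sup_x f`, the superlevel sets `{x ∈ A | r ≤ f x y}` are closed in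
the compact set `A`, so it suffices that finitely many of them, for `y₁, …, yₙ`, meet. Otherwise
the set `{z ∈ ℝⁿ | ∃ x ∈ A, z ≤ (f x yᵢ)ᵢ}`, convex by concavity in `x`, misses the open orthant
`{z | r < z}`; a separating functional yields weights `μ` in the simplex with `∑ μᵢ f x yᵢ ≤ r`
for all `x ∈ A`, and convexity in `y` then gives `sup_x f (x, ∑ μᵢ yᵢ) ≤ r < c`, which is absurd.
A point in the intersection over all `y ∈ B` and `r < c` attains the sup, and the trivial
inequality `sup inf ≤ inf sup` closes the gap.
-/

open Filter Topology Matrix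

section Orthant

variable {ι : Type*} [Fintype ι] {v : ι → ℝ} {r β : ℝ}

theorem nonneg_of_forall_lt_dotProduct (h : ∀ w : ι → ℝ, (∀ i, r < w i) → β < v ⬝ᵥ w) :
    0 ≤ v := by
  classical
  intro i
  by_contra! hi
  replace hi : v i < 0 := hi
  set u : ι → ℝ := (r + 1) • 1
  have hu : ∀ j, r < u j := fun j => by simp [u]
  -- moving `u` far enough along the `i`-th axis brings `v ⬝ᵥ ·` down to `β`
  set t := (v ⬝ᵥ u - β) / -v i
  have ht : 0 ≤ t := div_nonneg (sub_nonneg.2 (h u hu).le) (neg_nonneg.2 hi.le)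
  have hw : ∀ j, r < (u + Pi.single i t : ι → ℝ) j := fun j => by
    rcases eq_or_ne j i with rfl | hj
    · simpa using (hu j).trans_le (le_add_of_nonneg_right ht)
    · simpa [hj] using hu j
  have hβ := h _ hw
  rw [dotProduct_add, dotProduct_single] at hβ
  have ht_eq : v i * t = β - v ⬝ᵥ u := by
    simp only [t]; field_simp [hi.ne]; ring
  linarith

theorem le_mul_sum_of_forall_lt_dotProduct (h : ∀ w : ι → ℝ, (∀ i, r < w i) → β < v ⬝ᵥ w) :
    β ≤ r * ∑ i, v i := by
  have hlim : Tendsto (fun t => t * ∑ i, v i) (𝓝[>] r) (𝓝 (r * ∑ i, v i)) :=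
    ((continuous_mul_const _).tendsto r).mono_left nhdsWithin_le_nhds
  refine ge_of_tendsto hlim (eventually_nhdsWithin_of_forall fun t (ht : r < t) => ?_)
  simpa [dotProduct_smul, dotProduct_one] using (h (t • 1) fun _ => by simpa using ht).le

end Orthant

theorem Convex.exists_mem_stdSimplex_forall_dotProduct_le {ι : Type*} [Fintype ι]
    {K : Set (ι → ℝ)} (hK : Convex ℝ K) (hKne : K.Nonempty) {r : ℝ}
    (hKr : ∀ z ∈ K, ∃ i, z i ≤ r) :
    ∃ μ ∈ stdSimplex ℝ ι, ∀ z ∈ K, μ ⬝ᵥ z ≤ r := by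
  classical
  set U : Set (ι → ℝ) := Set.univ.pi fun _ => Set.Ioi r
  have hUK : Disjoint U K := Set.disjoint_left.2 fun w hwU hwK => by
    obtain ⟨i, hi⟩ := hKr w hwK
    exact hi.not_gt (hwU i (Set.mem_univ i))
  obtain ⟨φ, α, hφU, hφK⟩ := geometric_hahn_banach_open
    (convex_pi fun _ _ => convex_Ioi r) (isOpen_set_pi Set.finite_univ fun _ _ => isOpen_Ioi)
    hK hUK
  set v : ι → ℝ := -(dotProductEquiv ℝ ι).symm (φ : (ι → ℝ) →ₗ[ℝ] ℝ)
  have hφv : ∀ w, φ w = -(v ⬝ᵥ w) := fun w => by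
    rw [neg_dotProduct, neg_neg]
    exact (LinearMap.congr_fun ((dotProductEquiv ℝ ι).apply_symm_apply _) w).symm
  have hvU : ∀ w : ι → ℝ, (∀ i, r < w i) → -α < v ⬝ᵥ w := fun w hw => by
    linarith [hφv w, hφU w fun i _ => hw i]
  have hvK : ∀ z ∈ K, v ⬝ᵥ z ≤ -α := fun z hz => by
    linarith [hφv z, hφK z hz]
  have hv0 : 0 ≤ v := nonneg_of_forall_lt_dotProduct hvU
  have hv : v ≠ 0 := by
    rintro hv
    obtain ⟨z, hz⟩ := hKne
    have h₁ := hvK z hz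
    have h₂ := hvU ((r + 1) • 1) fun _ => by simp
    simp only [hv, zero_dotProduct] at h₁ h₂
    linarith
  set s := ∑ i, v i
  have hs : 0 < s :=
    (Fintype.sum_nonneg hv0).lt_of_ne' fun h => hv ((Fintype.sum_eq_zero_iff_of_nonneg hv0).1 h)
  refine ⟨s⁻¹ • v, ⟨fun i => mul_nonneg (inv_nonneg.2 hs.le) (hv0 i), ?_⟩, fun z hz => ?_⟩
  · simp only [Pi.smul_apply, smul_eq_mul, ← Finset.mul_sum]
    exact inv_mul_cancel₀ hs.ne'
  · rw [smul_dotProduct, smul_eq_mul, inv_mul_le_iff₀ hs]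
    linarith [hvK z hz, le_mul_sum_of_forall_lt_dotProduct hvU]

theorem exists_mem_forall_lt_of_concaveOn_of_convexOn {X Y : Type*}
    [AddCommGroup X] [Module ℝ X] [AddCommGroup Y] [Module ℝ Y]
    {f : X → Y → ℝ} {A : Set X} {B : Set Y}
    (hconc : ∀ y ∈ B, ConcaveOn ℝ A fun x => f x y) (hconv : ∀ x ∈ A, ConvexOn ℝ B (f x))
    {ι : Type*} [Fintype ι] [Nonempty ι] {y : ι → Y} (hy : ∀ i, y i ∈ B) {r : ℝ}
    (H : ∀ z ∈ B, ∃ x ∈ A, r < f x z) :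
    ∃ x ∈ A, ∀ i, r < f x (y i) := by
  by_contra! hcon
  obtain ⟨i₀⟩ := ‹Nonempty ι›
  set K : Set (ι → ℝ) := {z | ∃ x ∈ A, ∀ i, z i ≤ f x (y i)}
  have hK : Convex ℝ K := by
    rintro z ⟨x₁, hx₁, hz⟩ w ⟨x₂, hx₂, hw⟩ a b ha hb hab
    refine ⟨a • x₁ + b • x₂, (hconc _ (hy i₀)).1 hx₁ hx₂ ha hb hab, fun i => ?_⟩
    calc a * z i + b * w i ≤ a * f x₁ (y i) + b * f x₂ (y i) := by
          gcongr
          exacts [hz i, hw i]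
      _ ≤ f (a • x₁ + b • x₂) (y i) := (hconc _ (hy i)).2 hx₁ hx₂ ha hb hab
  have hfK : ∀ x ∈ A, (fun i => f x (y i)) ∈ K := fun x hx => ⟨x, hx, fun _ => le_rfl⟩
  have hKr : ∀ z ∈ K, ∃ i, z i ≤ r := by
    rintro z ⟨x, hx, hz⟩
    exact (hcon x hx).imp fun i hi => (hz i).trans hi
  obtain ⟨x₀, hx₀, -⟩ := H _ (hy i₀)
  obtain ⟨μ, hμ, hμK⟩ := hK.exists_mem_stdSimplex_forall_dotProduct_le ⟨_, hfK x₀ hx₀⟩ hKr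
  obtain ⟨x, hx, hrx⟩ := H (∑ i, μ i • y i)
    ((hconv x₀ hx₀).1.sum_mem (fun i _ => hμ.1 i) hμ.2 fun i _ => hy i)
  have hjensen := (hconv x hx).map_sum_le (fun i _ => hμ.1 i) hμ.2 fun i _ => hy i
  exact lt_irrefl r (hrx.trans_le (hjensen.trans (hμK _ (hfK x hx))))

theorem IsCompact.exists_iInf_iSup_le_iInf {X Y : Type*} [TopologicalSpace X]
    [AddCommGroup X] [Module ℝ X] [AddCommGroup Y] [Module ℝ Y]
    {f : X → Y → ℝ} {A : Set X} {B : Set Y} (hAc : IsCompact A) (hA : A.Nonempty)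
    (hconc : ∀ y ∈ B, ConcaveOn ℝ A fun x => f x y)
    (husc : ∀ y ∈ B, UpperSemicontinuousOn (fun x => f x y) A)
    (hconv : ∀ x ∈ A, ConvexOn ℝ B (f x)) :
    ∃ x₀ ∈ A, ⨅ y ∈ B, ⨆ x ∈ A, (f x y : EReal) ≤ ⨅ y ∈ B, (f x₀ y : EReal) := by
  set c := ⨅ y ∈ B, ⨆ x ∈ A, (f x y : EReal)
  set I : Set (Y × ℝ) := {p | p.1 ∈ B ∧ (p.2 : EReal) < c}
  set t : Y × ℝ → Set X := fun p => {x | p.2 ≤ f x p.1}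
  suffices h : (A ∩ ⋂ p ∈ I, t p).Nonempty by
    obtain ⟨x₀, hx₀A, hx₀⟩ := h
    refine ⟨x₀, hx₀A, le_iInf₂ fun y hy => ?_⟩
    by_contra! hlt
    obtain ⟨q, hq₁, hq₂⟩ := EReal.lt_iff_exists_real_btwn.1 hlt
    exact hq₁.not_ge (EReal.coe_le_coe_iff.2 (Set.mem_iInter₂.1 hx₀ (y, q) ⟨hy, hq₂⟩))
  rw [Set.nonempty_iff_ne_empty]
  intro hempty
  obtain ⟨u, hu⟩ := hAc.elim_finite_subfamily_isClosed_subtype t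
    (fun p hp => (upperSemicontinuousOn_iff_restrict.2 (husc p.1 hp.1)).isClosed_preimage p.2)
    hempty
  have hu_ne : u.Nonempty := by
    rw [Finset.nonempty_iff_ne_empty]
    rintro rfl
    simp only [Finset.notMem_empty, Set.iInter_of_empty, Set.iInter_univ, Set.inter_univ] at hu
    exact hA.ne_empty hu
  -- one threshold below `c` dominating those of the finite subfamily
  set r := u.sup' hu_ne fun p => (p : Y × ℝ).2
  have hrc : (r : EReal) < c := by
    obtain ⟨p, -, hpr⟩ := Finset.exists_mem_eq_sup' hu_ne fun p => (p : Y × ℝ).2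
    rw [show r = (p : Y × ℝ).2 from hpr]
    exact p.2.2
  have H : ∀ z ∈ B, ∃ x ∈ A, r < f x z := fun z hz => by
    obtain ⟨x, hx, hrx⟩ := lt_biSup_iff.1 (hrc.trans_le (biInf_le _ hz))
    exact ⟨x, hx, EReal.coe_lt_coe_iff.1 hrx⟩
  have : Nonempty u := hu_ne.to_subtype
  obtain ⟨x, hx, hrx⟩ := exists_mem_forall_lt_of_concaveOn_of_convexOn hconc hconv
    (y := fun q : u => (q : I).1.1) (fun q => (q : I).2.1) H
  exact Set.eq_empty_iff_forall_notMem.1 hu x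
    ⟨hx, Set.mem_iInter₂.2 fun p hp => (Finset.le_sup' _ hp).trans (hrx ⟨p, hp⟩).le⟩

theorem stmt6_general {X Y : Type*} [NormedAddCommGroup X] [NormedSpace ℝ X]
    [NormedAddCommGroup Y] [NormedSpace ℝ Y]
    (f : X → Y → ℝ) (A : Set X) (B : Set Y)
    (hA : A.Nonempty) (hAc : IsCompact A)
    (hconc : ∀ y ∈ B, ConcaveOn ℝ A (fun x => f x y))
    (husc : ∀ y ∈ B, UpperSemicontinuousOn (fun x => f x y) A)
    (hconv : ∀ x ∈ A, ConvexOn ℝ B (f x)) :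
    ∃ x₀ ∈ A, (⨅ y ∈ B, (f x₀ y : EReal)) = (⨆ x ∈ A, ⨅ y ∈ B, (f x y : EReal)) ∧
      (⨆ x ∈ A, ⨅ y ∈ B, (f x y : EReal)) = ⨅ y ∈ B, ⨆ x ∈ A, (f x y : EReal) := by
  obtain ⟨x₀, hx₀, hminimax⟩ := hAc.exists_iInf_iSup_le_iInf hA hconc husc hconv
  have hweak := iSup₂_iInf₂_le_iInf₂_iSup₂ B A fun y x => (f x y : EReal)
  have hx₀_le : ⨅ y ∈ B, (f x₀ y : EReal) ≤ ⨆ x ∈ A, ⨅ y ∈ B, (f x y : EReal) :=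
    le_iSup₂ (f := fun x _ => ⨅ y ∈ B, (f x y : EReal)) x₀ hx₀
  exact ⟨x₀, hx₀, le_antisymm hx₀_le (hweak.trans hminimax),
    le_antisymm hweak (hminimax.trans hx₀_le)⟩

/-- classical (Fan-type) minimax theorem for a real-valued bifunction,
concave-usc in `x` on the compact convex set `A`, convex in `y` on `B`;
the sup over `A` is attained. -/
theorem stmt6 {X Y : Type*} [NormedAddCommGroup X] [NormedSpace ℝ X]
    [NormedAddCommGroup Y] [NormedSpace ℝ Y]
    (f : X → Y → ℝ) (A : Set X) (B : Set Y)
    (hA : A.Nonempty) (hAc : IsCompact A) (hAconv : Convex ℝ A)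
    (hB : B.Nonempty) (hBconv : Convex ℝ B)
    (hconc : ∀ y ∈ B, ConcaveOn ℝ A (fun x => f x y))
    (husc : ∀ y ∈ B, UpperSemicontinuousOn (fun x => f x y) A)
    (hconv : ∀ x ∈ A, ConvexOn ℝ B (f x)) :
    ∃ x₀ ∈ A, (⨅ y ∈ B, (f x₀ y : EReal)) = (⨆ x ∈ A, ⨅ y ∈ B, (f x y : EReal)) ∧
      (⨆ x ∈ A, ⨅ y ∈ B, (f x y : EReal)) = ⨅ y ∈ B, ⨆ x ∈ A, (f x y : EReal) :=
  stmt6_general f A B hA hAc hconc husc hconv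
end

section
/- Let X be a real normed (or locally convex) space and f₁, …, f_n : X → ℝ ∪ {+∞} be proper convex functions whose pointwise maximum f := max_{1≤k≤n} f_k has nonempty effective domain. Then inf_{x∈X} f(x) = max_{λ∈Δ_n} inf_{x∈X} Σ_{k=1}^n λ_k f_k(x), where Δ_n = {λ ∈ ℝⁿ : λ_k ≥ 0, Σ λ_k = 1} is the standard simplex and the maximum over Δ_n is attained. -/
/-!
Weak duality is pointwise: a convex combination of finitely many values is at most their maximum.
For the converse, let `μ = inf_x max_k f_k x` be finite. The set
`C = {y ∈ ℝⁿ | ∃ x, ∀ k, f_k x ≤ y_k}` is convex, since the `f_k` are, and misses the open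
orthant `{y | ∀ k, y_k < μ}`. A functional separating the two is nonnegative on the coordinate
vectors because the orthant is unbounded below, and normalising it gives `λ` in the simplex with
`μ ≤ ∑ λ_k y_k` on `C`, that is, `μ ≤ inf_x ∑ λ_k f_k x`.
-/

open Filter Topology

/-- Scalar multiplication with the conventions `0·(+∞) = +∞` and `0·(−∞) = 0`. -/
noncomputable def smul0 (a : ℝ) (v : EReal) : EReal :=
  if a = 0 then (if v = ⊤ then ⊤ else 0) else (a : EReal) * v

open Finset

lemma smul0_coe (a r : ℝ) : smul0 a r = ((a * r : ℝ) : EReal) := by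
  by_cases ha : a = 0 <;> simp [smul0, ha, EReal.coe_mul]

lemma smul0_top {a : ℝ} (ha : 0 ≤ a) : smul0 a ⊤ = ⊤ := by
  by_cases ha0 : a = 0
  · simp [smul0, ha0]
  · simp [smul0, ha0, EReal.coe_mul_top_of_pos (ha.lt_of_ne (Ne.symm ha0))]

lemma smul0_ne_bot {a : ℝ} (ha : 0 ≤ a) {v : EReal} (hv : v ≠ ⊥) : smul0 a v ≠ ⊥ := by
  induction v using EReal.rec with
  | bot => exact absurd rfl hv
  | coe r => rw [smul0_coe]; exact EReal.coe_ne_bot _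
  | top => rw [smul0_top ha]; exact top_ne_bot

lemma EReal.coe_finsetSum {ι : Type*} (s : Finset ι) (g : ι → ℝ) :
    ((∑ i ∈ s, g i : ℝ) : EReal) = ∑ i ∈ s, (g i : EReal) :=
  map_sum (⟨⟨(↑), EReal.coe_zero⟩, EReal.coe_add⟩ : ℝ →+ EReal) g s

lemma EReal.finsetSum_ne_bot {ι : Type*} {s : Finset ι} {g : ι → EReal}
    (hg : ∀ i ∈ s, g i ≠ ⊥) : ∑ i ∈ s, g i ≠ ⊥ :=
  Finset.sum_induction g (· ≠ ⊥) (fun _ _ ha hb => EReal.add_ne_bot_iff.2 ⟨ha, hb⟩)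
    EReal.zero_ne_bot hg

lemma EReal.finsetSum_eq_top {ι : Type*} [DecidableEq ι] {s : Finset ι} {g : ι → EReal}
    (hg : ∀ i ∈ s, g i ≠ ⊥) {k : ι} (hk : k ∈ s) (hgk : g k = ⊤) : ∑ i ∈ s, g i = ⊤ := by
  rw [← Finset.add_sum_erase s g hk, hgk]
  exact EReal.top_add_of_ne_bot (EReal.finsetSum_ne_bot fun i hi => hg i (mem_of_mem_erase hi))

section Pointwise

variable {ι : Type*} [Fintype ι] {l : ι → ℝ} {v : ι → EReal}

lemma sum_smul0_coe (l r : ι → ℝ) :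
    ∑ k, smul0 (l k) (r k) = ((∑ k, l k * r k : ℝ) : EReal) := by
  simp only [smul0_coe, EReal.coe_finsetSum]

lemma sum_smul0_eq_top (hl : ∀ k, 0 ≤ l k) (hv : ∀ k, v k ≠ ⊥) {k : ι} (hk : v k = ⊤) :
    ∑ k, smul0 (l k) (v k) = ⊤ := by
  classical
  exact EReal.finsetSum_eq_top (fun j _ => smul0_ne_bot (hl j) (hv j)) (mem_univ k)
    (by rw [hk, smul0_top (hl k)])

lemma sum_smul0_le_iSup (hl : l ∈ stdSimplex ℝ ι) (hv : ∀ k, v k ≠ ⊥) :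
    ∑ k, smul0 (l k) (v k) ≤ ⨆ k, v k := by
  by_cases htop : ∃ k, v k = ⊤
  · obtain ⟨k, hk⟩ := htop
    have : ⨆ k, v k = ⊤ := top_unique (hk ▸ le_iSup v k)
    exact this ▸ le_top
  push Not at htop
  lift v to ι → ℝ using fun k => ⟨htop k, hv k⟩
  have : Nonempty ι := by
    by_contra h
    simpa [not_nonempty_iff.1 h] using hl.2
  obtain ⟨j, hj⟩ := Finite.exists_max v
  rw [sum_smul0_coe]
  have hle : ∑ k, l k * v k ≤ v j := calc
    ∑ k, l k * v k ≤ ∑ k, l k * v j :=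
        sum_le_sum fun k _ => mul_le_mul_of_nonneg_left (hj k) (hl.1 k)
    _ = v j := by rw [← sum_mul, hl.2, one_mul]
  exact (EReal.coe_le_coe_iff.2 hle).trans (le_iSup (fun k => (v k : EReal)) j)

lemma coe_le_sum_smul0 (hl : ∀ k, 0 ≤ l k) (hv : ∀ k, v k ≠ ⊥) {μ : ℝ}
    (h : ∀ r : ι → ℝ, (∀ k, v k = r k) → μ ≤ ∑ k, l k * r k) :
    (μ : EReal) ≤ ∑ k, smul0 (l k) (v k) := by
  by_cases htop : ∃ k, v k = ⊤
  · obtain ⟨k, hk⟩ := htop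
    rw [sum_smul0_eq_top hl hv hk]
    exact le_top
  push Not at htop
  lift v to ι → ℝ using fun k => ⟨htop k, hv k⟩
  rw [sum_smul0_coe]
  exact EReal.coe_le_coe_iff.2 (h v fun _ => rfl)

end Pointwise

lemma nonpos_of_forall_nonneg_mul_lt {𝕜 : Type*} [Field 𝕜] [LinearOrder 𝕜] [IsStrictOrderedRing 𝕜]
    {b u : 𝕜} (h : ∀ t, 0 ≤ t → t * b < u) : b ≤ 0 := by
  by_contra! hb
  have hu : 0 < u := by simpa using h 0 le_rfl
  have := h (u / b) (div_nonneg hu.le hb.le)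
  rw [div_mul_cancel₀ u hb.ne'] at this
  exact lt_irrefl u this

lemma LinearMap.apply_eq_sum_apply_single_mul {R ι : Type*} [CommSemiring R] [Fintype ι]
    [DecidableEq ι] (φ : (ι → R) →ₗ[R] R) (y : ι → R) :
    φ y = ∑ k, φ (Pi.single k 1) * y k := by
  conv_lhs => rw [← univ_sum_single y, map_sum]
  refine sum_congr rfl fun k _ => ?_
  rw [mul_comm, ← smul_eq_mul, ← map_smul, ← Pi.single_smul, smul_eq_mul, mul_one]

lemma LinearMap.apply_single_nonneg_of_forall_pi_Iio_lt {ι : Type*} [DecidableEq ι]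
    (φ : (ι → ℝ) →ₗ[ℝ] ℝ) {μ u : ℝ} (hφ : ∀ y ∈ Set.univ.pi fun _ => Set.Iio μ, φ y < u)
    (k : ι) : 0 ≤ φ (Pi.single k 1) := by
  refine neg_nonpos.1 <| nonpos_of_forall_nonneg_mul_lt (u := u - φ ((μ - 1) • 1)) fun t ht => ?_
  have hmem : (μ - 1) • 1 - t • Pi.single k 1 ∈ Set.univ.pi fun _ => Set.Iio μ := fun j _ => by
    rcases eq_or_ne j k with rfl | hj
    · simp only [Set.mem_Iio, Pi.sub_apply, Pi.smul_apply, Pi.single_eq_same, Pi.one_apply,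
        smul_eq_mul, mul_one]
      linarith
    · simp [hj]
  have := hφ _ hmem
  rw [map_sub, map_smul φ t, smul_eq_mul] at this
  linarith

theorem Convex.exists_mem_stdSimplex_le_sum_mul {ι : Type*} [Fintype ι] {C : Set (ι → ℝ)}
    (hC : Convex ℝ C) (hne : C.Nonempty) {μ : ℝ} (hμ : ∀ y ∈ C, ∃ k, μ ≤ y k) :
    ∃ l ∈ stdSimplex ℝ ι, ∀ y ∈ C, μ ≤ ∑ k, l k * y k := by
  classical
  set D : Set (ι → ℝ) := Set.univ.pi fun _ => Set.Iio μ
  have hDC : Disjoint D C := Set.disjoint_left.2 fun y hyD hyC => by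
    obtain ⟨k, hk⟩ := hμ y hyC
    exact hk.not_gt (hyD k (Set.mem_univ k))
  obtain ⟨φ, u, hφD, hφC⟩ := geometric_hahn_banach_open (convex_pi fun _ _ => convex_Iio μ)
    (isOpen_set_pi Set.finite_univ fun _ _ => isOpen_Iio) hC hDC
  set a : ι → ℝ := fun k => φ (Pi.single k 1)
  have hφ (y : ι → ℝ) : φ y = ∑ k, a k * y k :=
    LinearMap.apply_eq_sum_apply_single_mul (φ : (ι → ℝ) →ₗ[ℝ] ℝ) y
  have ha (k : ι) : 0 ≤ a k :=
    LinearMap.apply_single_nonneg_of_forall_pi_Iio_lt (φ : (ι → ℝ) →ₗ[ℝ] ℝ) hφD k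
  have hφ1 : φ 1 = ∑ k, a k := by simp [hφ]
  have hconst (c : ℝ) (hc : c < μ) : c * φ 1 < u := by
    simpa using hφD (c • 1) fun k _ => by simpa using hc
  have hs : 0 < φ 1 := by
    refine (hφ1 ▸ sum_nonneg fun k _ => ha k).lt_of_ne fun hs0 => ?_
    have ha0 : ∀ k, a k = 0 := fun k =>
      (sum_eq_zero_iff_of_nonneg fun k _ => ha k).1 (hφ1 ▸ hs0.symm) k (mem_univ k)
    obtain ⟨y, hy⟩ := hne
    have hu : u ≤ 0 := by simpa [hφ, ha0] using hφC y hy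
    have := hconst (μ - 1) (by linarith)
    rw [← hs0, mul_zero] at this
    linarith
  refine ⟨fun k => a k / φ 1, ⟨fun k => div_nonneg (ha k) hs.le, ?_⟩, fun y hy => ?_⟩
  · rw [← sum_div, ← hφ1, div_self hs.ne']
  calc μ ≤ u / φ 1 := le_of_forall_lt fun c hc => (lt_div_iff₀ hs).2 (hconst c hc)
    _ ≤ φ y / φ 1 := div_le_div_of_nonneg_right (hφC y hy) hs.le
    _ = ∑ k, a k / φ 1 * y k := by
        rw [hφ, sum_div]
        exact sum_congr rfl fun k _ => by ring

theorem exists_mem_stdSimplex_le_iInf_sum_smul0 {X ι : Type*} [AddCommGroup X] [Module ℝ X]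
    [Fintype ι] {f : ι → X → EReal} (hnb : ∀ k x, f k x ≠ ⊥) (hconv : ∀ k, IsConvexEFn (f k))
    {x₀ : X} (hx₀ : ∀ k, f k x₀ ≠ ⊤) {μ : ℝ} (hμ : (μ : EReal) ≤ ⨅ x, ⨆ k, f k x) :
    ∃ l ∈ stdSimplex ℝ ι, (μ : EReal) ≤ ⨅ x, ∑ k, smul0 (l k) (f k x) := by
  set C : Set (ι → ℝ) := {y | ∃ x, ∀ k, f k x ≤ y k}
  have hC : Convex ℝ C := by
    rintro y ⟨x, hx⟩ y' ⟨x', hx'⟩ s t hs ht hst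
    refine ⟨s • x + t • x', fun k => ?_⟩
    simpa using hconv k (show (x, y k) ∈ _ from hx k) (show (x', y' k) ∈ _ from hx' k) hs ht hst
  have hne : C.Nonempty :=
    ⟨fun k => (f k x₀).toReal, x₀, fun k => (EReal.coe_toReal (hx₀ k) (hnb k x₀)).ge⟩
  have hCμ : ∀ y ∈ C, ∃ k, μ ≤ y k := by
    rintro y ⟨x, hx⟩
    by_contra! hlt
    have : (⨆ k, f k x) < μ := calc
      (⨆ k, f k x) ≤ ⨆ k, (y k : EReal) := iSup_mono hx
      _ < μ := by
        rw [← sup_univ_eq_iSup]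
        exact (Finset.sup_lt_iff (EReal.bot_lt_coe μ)).2 fun k _ => EReal.coe_lt_coe_iff.2 (hlt k)
    exact (hμ.trans (iInf_le _ x)).not_gt this
  obtain ⟨l, hl, hlC⟩ := hC.exists_mem_stdSimplex_le_sum_mul hne hCμ
  refine ⟨l, hl, le_iInf fun x => coe_le_sum_smul0 hl.1 (hnb · x) fun r hr => hlC r ⟨x, ?_⟩⟩
  exact fun k => (hr k).le

theorem stmt7_general {X : Type*} [NormedAddCommGroup X] [NormedSpace ℝ X]
    (n : ℕ) (hn : 0 < n) (f : Fin n → X → EReal)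
    (hnb : ∀ k x, f k x ≠ ⊥)
    (hconv : ∀ k, IsConvexEFn (f k))
    (hdom : ∃ x, (⨆ k, f k x) ≠ ⊤) :
    ∃ l : Fin n → ℝ, (∀ k, 0 ≤ l k) ∧ (∑ k, l k = 1) ∧
      (⨅ x, ∑ k, smul0 (l k) (f k x)) = (⨅ x, ⨆ k, f k x) ∧
      ∀ m : Fin n → ℝ, (∀ k, 0 ≤ m k) → (∑ k, m k = 1) →
        (⨅ x, ∑ k, smul0 (m k) (f k x)) ≤ ⨅ x, ⨆ k, f k x := by
  have weak (m : Fin n → ℝ) (hm₀ : ∀ k, 0 ≤ m k) (hm₁ : ∑ k, m k = 1) :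
      (⨅ x, ∑ k, smul0 (m k) (f k x)) ≤ ⨅ x, ⨆ k, f k x :=
    iInf_mono fun x => sum_smul0_le_iSup ⟨hm₀, hm₁⟩ (hnb · x)
  suffices ∃ l ∈ stdSimplex ℝ (Fin n), (⨅ x, ⨆ k, f k x) ≤ ⨅ x, ∑ k, smul0 (l k) (f k x) by
    obtain ⟨l, hl, hle⟩ := this
    exact ⟨l, hl.1, hl.2, (weak l hl.1 hl.2).antisymm hle, weak⟩
  obtain ⟨x₀, hx₀⟩ := hdom
  induction hM : ⨅ x, ⨆ k, f k x using EReal.rec with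
  | bot => exact ⟨Pi.single ⟨0, hn⟩ 1, single_mem_stdSimplex ℝ _, bot_le⟩
  | coe μ =>
    exact exists_mem_stdSimplex_le_iInf_sum_smul0 hnb hconv
      (fun k => ne_top_of_le_ne_top hx₀ (le_iSup (f · x₀) k)) hM.ge
  | top => exact absurd (top_unique (hM ▸ iInf_le _ x₀)) hx₀

/-- Lagrangian duality for a finite max of proper convex functions:
`inf max_k f_k = max_{λ ∈ Δ_n} inf Σ λ_k f_k`, the max over the simplex attained. -/
theorem stmt7 {X : Type*} [NormedAddCommGroup X] [NormedSpace ℝ X]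
    (n : ℕ) (hn : 0 < n) (f : Fin n → X → EReal)
    (hnb : ∀ k x, f k x ≠ ⊥) (hpr : ∀ k, ∃ x, f k x ≠ ⊤)
    (hconv : ∀ k, IsConvexEFn (f k))
    (hdom : ∃ x, (⨆ k, f k x) ≠ ⊤) :
    ∃ l : Fin n → ℝ, (∀ k, 0 ≤ l k) ∧ (∑ k, l k = 1) ∧
      (⨅ x, ∑ k, smul0 (l k) (f k x)) = (⨅ x, ⨆ k, f k x) ∧
      ∀ m : Fin n → ℝ, (∀ k, 0 ≤ m k) → (∑ k, m k = 1) →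
        (⨅ x, ∑ k, smul0 (m k) (f k x)) ≤ ⨅ x, ⨆ k, f k x :=
  stmt7_general n hn f hnb hconv hdom
end

section
/- Let X be a real normed space, A ⊆ X a nonempty compact convex set with nonempty interior, and (φ_i)_{i∈I} a non-decreasing net of proper convex functions φ_i : X → ℝ ∪ {+∞} such that φ := sup_{i∈I} φ_i is finite and continuous at some point of int(A). Then inf_{x∈A} sup_{i∈I} φ_i(x) = sup_{i∈I} inf_{x∈A} φ_i(x). -/
open Filter Topology

/-- minimax interchange for a non-decreasing net of proper convex
functions whose supremum is finite and continuous at an interior point of the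
compact convex set `A`. -/
theorem stmt17 {X I : Type*} [NormedAddCommGroup X] [NormedSpace ℝ X]
    [Preorder I] [Nonempty I] [IsDirected I (· ≤ ·)]
    (A : Set X) (hA : A.Nonempty) (hAc : IsCompact A) (hAconv : Convex ℝ A)
    (hint : (interior A).Nonempty)
    (φ : I → X → EReal) (hmono : Monotone φ)
    (hproper : ∀ i, IsProperE (φ i)) (hconv : ∀ i, IsConvexEFn (φ i))
    (x₀ : X) (hx₀ : x₀ ∈ interior A)
    (hfin : (⨆ i, φ i x₀) ≠ ⊤ ∧ (⨆ i, φ i x₀) ≠ ⊥)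
    (hcont : ContinuousAt (fun x => ⨆ i, φ i x) x₀) :
    (⨅ x ∈ A, ⨆ i, φ i x) = ⨆ i, ⨅ x ∈ A, φ i x := by
  classical
  set φs : X → EReal := fun x => ⨆ i, φ i x with hφsdef
  set c : EReal := ⨆ i, ⨅ x ∈ A, φ i x with hcdef
  have hAcl : IsClosed A := hAc.isClosed
  have hx₀A : x₀ ∈ A := interior_subset hx₀
  have hge : c ≤ ⨅ x ∈ A, φs x := by
    refine iSup_le fun i => le_iInf fun x => le_iInf fun hx => ?_
    exact le_trans (iInf₂_le x hx) (le_iSup (fun j => φ j x) i)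
  refine le_antisymm ?_ hge
  -- continuity bound near x₀
  set M : ℝ := (φs x₀).toReal + 1 with hMdef
  have hvM : φs x₀ < (M : EReal) := by
    have h1 : φs x₀ = ((φs x₀).toReal : EReal) := (EReal.coe_toReal hfin.1 hfin.2).symm
    rw [h1]
    exact_mod_cast lt_add_one _
  have hev : ∀ᶠ w in 𝓝 x₀, φs w < (M : EReal) := hcont.eventually_lt_const hvM
  obtain ⟨δ, hδ, hball⟩ := Metric.eventually_nhds_iff.mp hev
  by_contra hlt
  push_neg at hlt
  obtain ⟨r, hcr, hrb⟩ := EReal.exists_between_coe_real hlt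
  obtain ⟨s, hrs, hsb⟩ := EReal.exists_between_coe_real hrb
  have hrs' : r < s := by exact_mod_cast hrs
  set S : I → Set X := fun i => {x | x ∈ A ∧ φ i x < (r : EReal)} with hSdef
  have hSne : ∀ i, (S i).Nonempty := by
    intro i
    have h1 : (⨅ x ∈ A, φ i x) < (r : EReal) :=
      lt_of_le_of_lt (le_iSup (fun j => ⨅ x ∈ A, φ j x) i) hcr
    rw [iInf_lt_iff] at h1
    obtain ⟨x, hx⟩ := h1
    rw [iInf_lt_iff] at hx
    obtain ⟨hxA, hxr⟩ := hx
    exact ⟨x, hxA, hxr⟩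
  have hSsub : ∀ i, S i ⊆ A := fun i x hx => hx.1
  set C : I → Set X := fun i => closure (S i) with hCdef
  have hCsub : ∀ i, C i ⊆ A := fun i => by
    have := closure_mono (hSsub i)
    rwa [hAcl.closure_eq] at this
  have hCanti : ∀ {i j : I}, i ≤ j → C j ⊆ C i := by
    intro i j hij
    exact closure_mono fun x hx => ⟨hx.1, lt_of_le_of_lt (hmono hij x) hx.2⟩
  have hCdir : Directed (· ⊇ ·) C := by
    intro i j
    obtain ⟨k, hik, hjk⟩ := directed_of (· ≤ ·) i j
    exact ⟨k, hCanti hik, hCanti hjk⟩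
  obtain ⟨xb, hxb⟩ := IsCompact.nonempty_iInter_of_directed_nonempty_isCompact_isClosed C hCdir
    (fun i => (hSne i).closure) (fun i => hAc.of_isClosed_subset isClosed_closure (hCsub i))
    (fun i => isClosed_closure)
  have hxbC : ∀ i, xb ∈ C i := fun i => Set.mem_iInter.mp hxb i
  have hxbA : xb ∈ A := hCsub (Classical.arbitrary I) (hxbC _)
  -- choose t
  set t : ℝ := min (1/2) ((s - r) / (|M - r| + 1)) with htdef
  have habs : (0:ℝ) < |M - r| + 1 := by positivity
  have ht0 : 0 < t := by
    apply lt_min (by norm_num)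
    exact div_pos (by linarith) habs
  have ht1 : t < 1 := lt_of_le_of_lt (min_le_left _ _) (by norm_num)
  have ht1' : 0 < 1 - t := by linarith
  have hts : (1 - t) * r + t * M ≤ s := by
    have h1 : t ≤ (s - r) / (|M - r| + 1) := min_le_right _ _
    have h2 : t * (|M - r| + 1) ≤ s - r := by
      rw [div_eq_mul_inv] at h1
      calc t * (|M - r| + 1) ≤ ((s - r) * (|M - r| + 1)⁻¹) * (|M - r| + 1) := by
            exact mul_le_mul_of_nonneg_right h1 (le_of_lt habs)
        _ = s - r := by field_simp
    have h3 : M - r ≤ |M - r| := le_abs_self _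
    nlinarith [ht0.le]
  set y : X := (1 - t) • xb + t • x₀ with hydef
  have hyA : y ∈ A := hAconv hxbA hx₀A ht1'.le ht0.le (by ring)
  have hkey : ∀ i, φ i y ≤ (((1 - t) * r + t * M : ℝ) : EReal) := by
    intro i
    have hxbCi : xb ∈ closure (S i) := hxbC i
    obtain ⟨s', hs'S, hs'd⟩ := Metric.mem_closure_iff.mp hxbCi (t * δ / (1 - t))
      (by positivity)
    set w : X := x₀ + ((1 - t) / t) • (xb - s') with hwdef
    have hwd : dist w x₀ < δ := by
      have h1 : dist w x₀ = ((1 - t) / t) * ‖xb - s'‖ := by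
        rw [dist_eq_norm]
        have : w - x₀ = ((1 - t) / t) • (xb - s') := by rw [hwdef]; abel
        rw [this, norm_smul, Real.norm_eq_abs, abs_of_pos (by positivity)]
      rw [h1]
      have h2 : ‖xb - s'‖ < t * δ / (1 - t) := by rwa [dist_eq_norm] at hs'd
      calc ((1 - t) / t) * ‖xb - s'‖ < ((1 - t) / t) * (t * δ / (1 - t)) := by
            exact mul_lt_mul_of_pos_left h2 (by positivity)
        _ = δ := by field_simp
    have hwM : φ i w ≤ (M : EReal) :=
      le_of_lt (lt_of_le_of_lt (le_iSup (fun j => φ j w) i) (hball hwd))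
    have hs'r : φ i s' ≤ (r : EReal) := le_of_lt hs'S.2
    have hmem1 : (s', r) ∈ {p : X × ℝ | φ i p.1 ≤ (p.2 : EReal)} := hs'r
    have hmem2 : (w, M) ∈ {p : X × ℝ | φ i p.1 ≤ (p.2 : EReal)} := hwM
    have hcomb := hconv i hmem1 hmem2 ht1'.le ht0.le (by ring)
    have hfst : ((1 - t) • (s', r) + t • (w, M) : X × ℝ).1 = y := by
      show (1 - t) • s' + t • w = y
      rw [hwdef, hydef]
      rw [smul_add, smul_smul]
      rw [mul_div_cancel₀ _ (ne_of_gt ht0)]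
      rw [smul_sub]
      abel
    have hsnd : ((1 - t) • (s', r) + t • (w, M) : X × ℝ).2 = (1 - t) * r + t * M := by
      simp [smul_eq_mul]
    have := hcomb
    simp only [Set.mem_setOf_eq, hfst, hsnd] at this
    exact this
  have hφsy : φs y ≤ (((1 - t) * r + t * M : ℝ) : EReal) := iSup_le hkey
  have hfin2 : (⨅ x ∈ A, φs x) ≤ (s : EReal) := by
    refine le_trans (iInf₂_le y hyA) (le_trans hφsy ?_)
    exact_mod_cast hts
  exact absurd (lt_of_lt_of_le hsb hfin2) (lt_irrefl _)
end

section
/- Let X be a reflexive real Banach space (or more generally pair X with its dual via the weak topologies). For every proper convex lower semicontinuous function f : X → ℝ ∪ {+∞} and every x ∈ X, the biconjugate satisfies f**(x) = f(x), where f*(x*) = sup_{y∈X}(⟨x*,y⟩ − f(y)) and f**(x) = sup_{x*∈X*}(⟨x*,x⟩ − f*(x*)). -/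
open Filter Topology

section Aux

variable {X : Type*} [NormedAddCommGroup X] [NormedSpace ℝ X]

lemma div_trick {d a r u : ℝ} (hd : 0 < d) (h : a - d * r ≤ u) : d⁻¹ * a - r ≤ d⁻¹ * u := by
  have h2 := mul_le_mul_of_nonneg_left h (inv_nonneg.2 hd.le)
  have h3 : d⁻¹ * (a - d * r) = d⁻¹ * a - (d⁻¹ * d) * r := by ring
  rw [h3, inv_mul_cancel₀ hd.ne'] at h2
  linarith

lemma div_trick' {d a t u : ℝ} (hd : 0 < d) (h : u < a - d * t) : t < d⁻¹ * a - d⁻¹ * u := by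
  have h2 := mul_lt_mul_of_pos_left h (inv_pos.2 hd)
  have h3 : d⁻¹ * (a - d * t) = d⁻¹ * a - (d⁻¹ * d) * t := by ring
  rw [h3, inv_mul_cancel₀ hd.ne'] at h2
  linarith

/-- Bound on the conjugate from a pointwise bound on the domain. -/
lemma conj_le_of_bound (f : X → EReal) (p : X →L[ℝ] ℝ) (α : ℝ)
    (h : ∀ y, f y ≠ ⊤ → (p y : ℝ) - (f y).toReal ≤ α) (hbot : ∀ y, f y ≠ ⊥) :
    (⨆ y, (((p y : ℝ) : EReal) - f y)) ≤ (α : EReal) := by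
  refine iSup_le fun y => ?_
  by_cases hy : f y = ⊤
  · rw [hy]
    show ((p y : ℝ) : EReal) - ⊤ ≤ (α : EReal)
    rw [(rfl : ((p y : ℝ) : EReal) - ⊤ = ⊥)]
    exact bot_le
  · have hr : f y = ((f y).toReal : EReal) := (EReal.coe_toReal hy (hbot y)).symm
    rw [hr, ← EReal.coe_sub, EReal.coe_le_coe_iff]
    exact h y hy

/-- Separation of the epigraph from a point strictly below the graph. -/
lemma sep_epigraph (f : X → EReal) (hproper : IsProperE f) (hconv : IsConvexEFn f)
    (hlsc : LowerSemicontinuous f) {z : X} {t : ℝ} (ht : (t : EReal) < f z) :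
    ∃ (g : X →L[ℝ] ℝ) (c u : ℝ), c ≤ 0 ∧
      (∀ y (r : ℝ), f y ≤ (r : EReal) → g y + c * r < u) ∧ u < g z + c * t := by
  classical
  set E : Set (X × ℝ) := {p : X × ℝ | f p.1 ≤ (p.2 : EReal)} with hE
  have hclosed : IsClosed E := by
    have h1 : IsClosed {p : X × EReal | f p.1 ≤ p.2} := hlsc.isClosed_epigraph
    have : E = (fun p : X × ℝ => (p.1, (p.2 : EReal))) ⁻¹' {p : X × EReal | f p.1 ≤ p.2} := rfl
    rw [this]
    exact h1.preimage (continuous_fst.prodMk (continuous_coe_real_ereal.comp continuous_snd))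
  have hzt : (z, t) ∉ E := fun h => absurd h (not_le.2 ht)
  obtain ⟨φ, u, hu1, hu2⟩ := geometric_hahn_banach_closed_point hconv hclosed hzt
  set g : X →L[ℝ] ℝ := φ.comp (ContinuousLinearMap.inl ℝ X ℝ) with hg
  set c : ℝ := φ (0, 1) with hc
  have hφ : ∀ (y : X) (r : ℝ), φ (y, r) = g y + c * r := by
    intro y r
    have : (y, r) = (y, (0 : ℝ)) + r • ((0 : X), (1 : ℝ)) := by
      simp [Prod.ext_iff]
    rw [this, map_add, map_smul]
    simp [hg, hc, mul_comm]
  -- c ≤ 0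
  obtain ⟨y₀, hy₀⟩ := hproper.2
  have hy₀b := hproper.1 y₀
  have hy₀r : f y₀ = ((f y₀).toReal : EReal) := (EReal.coe_toReal hy₀ hy₀b).symm
  set r₀ : ℝ := (f y₀).toReal with hr₀
  have hmem : ∀ n : ℕ, ((y₀, r₀ + n) : X × ℝ) ∈ E := by
    intro n
    show f y₀ ≤ ((r₀ + n : ℝ) : EReal)
    rw [hy₀r, EReal.coe_le_coe_iff]
    exact le_add_of_nonneg_right n.cast_nonneg
  have hcle : c ≤ 0 := by
    by_contra hcpos
    push_neg at hcpos
    obtain ⟨n, hn⟩ := exists_nat_gt ((u - g y₀ - c * r₀) / c)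
    have h1 := hu1 _ (hmem n)
    rw [hφ] at h1
    have h2 : (u - g y₀ - c * r₀) / c < n := hn
    rw [div_lt_iff₀ hcpos] at h2
    nlinarith
  refine ⟨g, c, u, hcle, ?_, ?_⟩
  · intro y r hyr
    have := hu1 (y, r) hyr
    rwa [hφ] at this
  · have := hu2
    rwa [hφ] at this

/-- Existence of a continuous affine minorant: the conjugate is finite somewhere. -/
lemma exists_conj_lt_top (f : X → EReal) (hproper : IsProperE f) (hconv : IsConvexEFn f)
    (hlsc : LowerSemicontinuous f) :
    ∃ (p : X →L[ℝ] ℝ) (α : ℝ), (⨆ y, (((p y : ℝ) : EReal) - f y)) ≤ (α : EReal) := by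
  obtain ⟨y₀, hy₀⟩ := hproper.2
  have hy₀b := hproper.1 y₀
  have hy₀r : f y₀ = (((f y₀).toReal : ℝ) : EReal) := (EReal.coe_toReal hy₀ hy₀b).symm
  have ht : (((f y₀).toReal - 1 : ℝ) : EReal) < f y₀ := by
    calc (((f y₀).toReal - 1 : ℝ) : EReal) < (((f y₀).toReal : ℝ) : EReal) := by
          rw [EReal.coe_lt_coe_iff]; linarith
      _ = f y₀ := hy₀r.symm
  obtain ⟨g, c, u, hcle, hsep, hpt⟩ := sep_epigraph f hproper hconv hlsc ht
  have hcne : c ≠ 0 := by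
    intro hc0
    have h1 := hsep y₀ (f y₀).toReal (le_of_eq hy₀r)
    rw [hc0] at h1 hpt
    simp at h1 hpt
    linarith
  have hcneg : c < 0 := lt_of_le_of_ne hcle hcne
  set d : ℝ := -c with hd
  have hdpos : 0 < d := by simp [hd]; linarith
  refine ⟨d⁻¹ • g, u / d, conj_le_of_bound f _ _ ?_ hproper.1⟩
  intro y hy
  have hyr : f y = (((f y).toReal : ℝ) : EReal) := (EReal.coe_toReal hy (hproper.1 y)).symm
  have h1 := hsep y (f y).toReal (le_of_eq hyr)
  have hc : c = -d := by simp [hd]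
  rw [hc] at h1
  have h2 : g y - d * (f y).toReal ≤ u := by linarith
  have hgyv : (d⁻¹ • g) y = d⁻¹ * g y := rfl
  rw [hgyv, div_eq_inv_mul]
  exact div_trick hdpos h2

/-- Key step: any real number below `f x` is below some affine term of the biconjugate. -/
lemma key_lemma_s18 (f : X → EReal) (hproper : IsProperE f) (hconv : IsConvexEFn f)
    (hlsc : LowerSemicontinuous f) (x : X) (t : ℝ) (ht : (t : EReal) < f x) :
    ∃ p : X →L[ℝ] ℝ,
      (t : EReal) < (((p x : ℝ) : EReal) - ⨆ y, (((p y : ℝ) : EReal) - f y)) := by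
  obtain ⟨g, c, u, hcle, hsep, hpt⟩ := sep_epigraph f hproper hconv hlsc ht
  rcases lt_or_eq_of_le hcle with hcneg | hc0
  · -- c < 0 : standard affine minorant through the separating hyperplane
    set d : ℝ := -c with hd
    have hdpos : 0 < d := by simp [hd]; linarith
    set p : X →L[ℝ] ℝ := d⁻¹ • g with hp
    have hpy : ∀ y : X, p y = d⁻¹ * g y := fun y => rfl
    have hconj : (⨆ y, (((p y : ℝ) : EReal) - f y)) ≤ ((u / d : ℝ) : EReal) := by
      refine conj_le_of_bound f _ _ ?_ hproper.1
      intro y hy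
      have hyr : f y = (((f y).toReal : ℝ) : EReal) := (EReal.coe_toReal hy (hproper.1 y)).symm
      have h1 := hsep y (f y).toReal (le_of_eq hyr)
      have hc : c = -d := by simp [hd]
      rw [hc] at h1
      rw [hpy, div_eq_inv_mul]
      exact div_trick hdpos (by linarith)
    have hx : t < p x - u / d := by
      have hc : c = -d := by simp [hd]
      rw [hc] at hpt
      rw [hpy, div_eq_inv_mul]
      have := div_trick' hdpos (show u < g x - d * t by linarith)
      linarith
    refine ⟨p, ?_⟩
    calc (t : EReal) < (((p x - u / d : ℝ)) : EReal) := by rwa [EReal.coe_lt_coe_iff]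
      _ = ((p x : ℝ) : EReal) - ((u / d : ℝ) : EReal) := by rw [EReal.coe_sub]
      _ ≤ ((p x : ℝ) : EReal) - ⨆ y, (((p y : ℝ) : EReal) - f y) :=
          EReal.sub_le_sub (le_refl _) hconj
  · -- c = 0 : tilt a fixed affine minorant by the separating functional
    obtain ⟨p₀, α, hα⟩ := exists_conj_lt_top f hproper hconv hlsc
    have hgy : ∀ y, f y ≠ ⊤ → g y < u := by
      intro y hy
      have hyr : f y = (((f y).toReal : ℝ) : EReal) := (EReal.coe_toReal hy (hproper.1 y)).symm
      have h1 := hsep y (f y).toReal (le_of_eq hyr)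
      rw [hc0] at h1
      simpa using h1
    have hgx : u < g x := by rw [hc0] at hpt; simpa using hpt
    set Q : ℝ := (t - p₀ x + α + 1) / (g x - u) with hQ
    set lam : ℝ := max 0 Q with hlam
    have hlam0 : 0 ≤ lam := le_max_left _ _
    have hgxu : 0 < g x - u := by linarith
    have hlamQ : t - p₀ x + α + 1 ≤ lam * (g x - u) := by
      have h1 : Q ≤ lam := le_max_right _ _
      have h2 : Q * (g x - u) ≤ lam * (g x - u) :=
        mul_le_mul_of_nonneg_right h1 (le_of_lt hgxu)
      have h3 : Q * (g x - u) = t - p₀ x + α + 1 := by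
        rw [hQ]; field_simp
      linarith
    set p : X →L[ℝ] ℝ := p₀ + lam • g with hp
    have hpy : ∀ y : X, p y = p₀ y + lam * g y := fun y => rfl
    have hα' : ∀ y, f y ≠ ⊤ → (p₀ y : ℝ) - (f y).toReal ≤ α := by
      intro y hy
      have hyr : f y = (((f y).toReal : ℝ) : EReal) := (EReal.coe_toReal hy (hproper.1 y)).symm
      have h1 : (((p₀ y : ℝ) : EReal) - f y) ≤ (α : EReal) := le_trans (le_iSup (fun y => ((p₀ y : ℝ) : EReal) - f y) y) hα
      rw [hyr, ← EReal.coe_sub, EReal.coe_le_coe_iff] at h1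
      exact h1
    have hconj : (⨆ y, (((p y : ℝ) : EReal) - f y)) ≤ ((α + lam * u : ℝ) : EReal) := by
      refine conj_le_of_bound f _ _ ?_ hproper.1
      intro y hy
      have h1 := hα' y hy
      have h2 := hgy y hy
      rw [hpy]
      nlinarith
    have hx : t < p x - (α + lam * u) := by
      rw [hpy]
      nlinarith
    refine ⟨p, ?_⟩
    calc (t : EReal) < (((p x - (α + lam * u) : ℝ)) : EReal) := by rwa [EReal.coe_lt_coe_iff]
      _ = ((p x : ℝ) : EReal) - ((α + lam * u : ℝ) : EReal) := by rw [EReal.coe_sub]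
      _ ≤ ((p x : ℝ) : EReal) - ⨆ y, (((p y : ℝ) : EReal) - f y) :=
          EReal.sub_le_sub (le_refl _) hconj

end Aux

/-- Fenchel–Moreau: for every proper convex lsc `f` on a real Banach
space, `f**(x) = f(x)`, the biconjugate being taken through the continuous dual. -/
theorem stmt18 {X : Type*} [NormedAddCommGroup X] [NormedSpace ℝ X] [CompleteSpace X]
    (f : X → EReal) (hproper : IsProperE f) (hconv : IsConvexEFn f)
    (hlsc : LowerSemicontinuous f) (x : X) :
    (⨆ p : X →L[ℝ] ℝ, (((p x : ℝ) : EReal) - ⨆ y, (((p y : ℝ) : EReal) - f y))) = f x := by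
  refine le_antisymm (iSup_le fun p => ?_) ?_
  · -- easy direction
    by_cases hx : f x = ⊤
    · rw [hx]; exact le_top
    · have hxb := hproper.1 x
      have hxr : f x = (((f x).toReal : ℝ) : EReal) := (EReal.coe_toReal hx hxb).symm
      have h1 : (((p x - (f x).toReal : ℝ)) : EReal) ≤ ⨆ y, (((p y : ℝ) : EReal) - f y) := by
        have : (((p x - (f x).toReal : ℝ)) : EReal) = ((p x : ℝ) : EReal) - f x := by
          conv_rhs => rw [hxr]
          rw [EReal.coe_sub]
        rw [this]
        exact le_iSup (fun y => ((p y : ℝ) : EReal) - f y) x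
      calc ((p x : ℝ) : EReal) - ⨆ y, (((p y : ℝ) : EReal) - f y)
          ≤ ((p x : ℝ) : EReal) - (((p x - (f x).toReal : ℝ)) : EReal) :=
            EReal.sub_le_sub (le_refl _) h1
        _ = f x := by
            rw [← EReal.coe_sub]
            have : p x - (p x - (f x).toReal) = (f x).toReal := by ring
            rw [this]
            exact hxr.symm
  · -- hard direction
    refine le_of_forall_lt fun c hc => ?_
    obtain ⟨t, hct, htf⟩ := EReal.exists_between_coe_real hc
    obtain ⟨p, hp⟩ := key_lemma_s18 f hproper hconv hlsc x t htf
    exact lt_of_lt_of_le hct (le_trans (le_of_lt hp) (le_iSup (fun p : X →L[ℝ] ℝ => ((p x : ℝ) : EReal) - ⨆ y, (((p y : ℝ) : EReal) - f y)) p))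
end
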